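/- arXiv:2303.01790 — 4 statements merged into one kernel-verified Lean document; each statement's English description precedes it below -/
import Mathlib

section
/- Let k ≥ 1, let m_1, …, m_k be positive integers with M = m_1 + ⋯ + m_k, set n = M − (k−1), let l_1, …, l_n be positive integers with L = l_1 + ⋯ + l_n, and let 0̂ ∈ P(L) denote the interval partition of {1,…,L} into n consecutive blocks of sizes l_1, …, l_n. Then the number of k-tuples (W_1,…,W_k) of subsets of {1,…,L} with |W_i| = m_i for every i and τ(W_1) ∨ ⋯ ∨ τ(W_k) ∨ 0̂ = 1_L (joins in the partition lattice) equals (∏_{j=1}^n l_j) · ((M−k)! / ∏_{i=1}^k (m_i−1)!) · (Σ_{j=1}^n l_j)^{k−1}. -/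
/-!
Write the interval partition as the fibre partition of the block map `b : Fin L → Fin n`. Joining
`τ(W)` with the fibres of `b` merges the blocks met by `W` into a single block, which is again a
fibre partition, of `collapse (W.image b) ∘ b`. Each `τ(W_i)` lowers the number of blocks by at
most `|W_i| - 1`, and these add up to `n - 1`; so in a connecting tuple `W_1` must meet `m_1`
distinct blocks in one point each, and `W_2, …, W_k` must connect the collapsed partition, which
has `n - m_1 + 1` blocks. Induction on `k` then gives the formula, with the sum over the `m_1`
blocks met by `W_1` of their total size contributing `binom (n - 1) (m_1 - 1) · L`. Counting
`L` times the number of tuples makes the formula hold for `k = 0` as well.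
-/
open Finset Filter

/-- The partition of `α` whose blocks are `W` together with the singletons outside `W`,
encoded as a setoid. -/
def tauSetoid {α : Type*} (W : Finset α) : Setoid α where
  r a b := a = b ∨ (a ∈ W ∧ b ∈ W)
  iseqv := by
    constructor
    · exact fun a => Or.inl rfl
    · rintro a b (rfl | ⟨h1, h2⟩)
      · exact Or.inl rfl
      · exact Or.inr ⟨h2, h1⟩
    · rintro a b c (rfl | ⟨h1, h2⟩) h
      · exact h
      · rcases h with rfl | ⟨h3, h4⟩
        · exact Or.inr ⟨h1, h2⟩
        · exact Or.inr ⟨h1, h4⟩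

/-- The interval partition of `Fin M` into `k` consecutive blocks of sizes `m 0, …, m (k-1)`,
encoded as a setoid: two points are equivalent iff the same number of partial sums
`m 0 + ⋯ + m (i-1)` are below them. -/
def intervalSetoid (k M : ℕ) (m : Fin k → ℕ) : Setoid (Fin M) :=
  Setoid.ker (fun x : Fin M =>
    (Finset.univ.filter (fun i : Fin k =>
      (∑ j ∈ Finset.univ.filter (fun j => j < i), m j) ≤ (x : ℕ))).card)

variable {α β : Type*}

lemma iSup_fin_succ {γ : Type*} [CompleteLattice γ] {k : ℕ} (f : Fin (k + 1) → γ) :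
    ⨆ i, f i = f 0 ⊔ ⨆ i : Fin k, f i.succ :=
  le_antisymm
    (iSup_le <| Fin.cases le_sup_left fun i => le_sup_of_le_right (le_iSup (f ∘ Fin.succ) i))
    (sup_le (le_iSup f 0) (iSup_le fun i => le_iSup f i.succ))

section Collapse

variable [DecidableEq β]

def collapse (T : Finset β) (j : β) : Option {j // j ∉ T} :=
  if h : j ∈ T then none else some ⟨j, h⟩

lemma collapse_eq_none {T : Finset β} {j : β} : collapse T j = none ↔ j ∈ T := by
  unfold collapse; split_ifs with h <;> simp [h]

lemma collapse_eq_some {T : Finset β} {j : β} {j' : {j // j ∉ T}} :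
    collapse T j = some j' ↔ j = j' := by
  unfold collapse
  split_ifs with h
  · exact iff_of_false (by simp) fun e => j'.2 (e ▸ h)
  · simp [Subtype.ext_iff]

lemma collapse_surjective {T : Finset β} (hT : T.Nonempty) : Function.Surjective (collapse T) := by
  rintro (_ | j)
  · obtain ⟨t, ht⟩ := hT
    exact ⟨t, collapse_eq_none.2 ht⟩
  · exact ⟨j, collapse_eq_some.2 rfl⟩

lemma card_option_notMem [Fintype β] (T : Finset β) :
    Fintype.card (Option {j // j ∉ T}) = Fintype.card β - #T + 1 := by
  simp

lemma tauSetoid_sup_ker_eq_ker_collapse (b : α → β) (W : Finset α) :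
    tauSetoid W ⊔ Setoid.ker b = Setoid.ker (collapse (W.image b) ∘ b) := by
  refine le_antisymm (sup_le ?_ ?_) fun x y hxy => ?_
  · rintro x y (rfl | ⟨hx, hy⟩)
    · rfl
    · exact Setoid.ker_def.2 <| (collapse_eq_none.2 (mem_image_of_mem b hx)).trans
        (collapse_eq_none.2 (mem_image_of_mem b hy)).symm
  · exact fun x y h => Setoid.ker_def.2 (congrArg (collapse _) (Setoid.ker_def.1 h))
  · have hxy : collapse _ (b x) = collapse _ (b y) := Setoid.ker_def.1 hxy
    set r := tauSetoid W ⊔ Setoid.ker b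
    have hb {x y} (h : b x = b y) : r x y := le_sup_right (a := tauSetoid W) (Setoid.ker_def.2 h)
    cases hc : collapse (W.image b) (b x) with
    | none =>
      obtain ⟨wx, hwx, hbx⟩ := mem_image.1 (collapse_eq_none.1 hc)
      obtain ⟨wy, hwy, hby⟩ := mem_image.1 (collapse_eq_none.1 (hxy ▸ hc))
      have hw : r wx wy := le_sup_left (b := Setoid.ker b) (Or.inr ⟨hwx, hwy⟩)
      exact r.trans (r.trans (hb hbx.symm) hw) (hb hby)
    | some j =>
      exact hb ((collapse_eq_some.1 hc).trans (collapse_eq_some.1 (hxy ▸ hc)).symm)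

variable [Fintype α]

lemma card_filter_collapse_eq_none (b : α → β) (T : Finset β) :
    #{x | collapse T (b x) = none} = ∑ t ∈ T, #{x | b x = t} := by
  simp_rw [collapse_eq_none]
  rw [card_eq_sum_card_fiberwise (f := b) (t := T) (fun x hx => by simpa using hx)]
  refine sum_congr rfl fun t ht => congrArg card ?_
  ext x; simp only [mem_filter, mem_univ, true_and]
  exact ⟨And.right, fun h => ⟨h ▸ ht, h⟩⟩

lemma prod_card_filter_collapse [Fintype β] (b : α → β) (T : Finset β) :
    ∏ j', #{x | collapse T (b x) = j'} =
      (∑ t ∈ T, #{x | b x = t}) * ∏ j ∈ Tᶜ, #{x | b x = j} := by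
  rw [Fintype.prod_option, card_filter_collapse_eq_none]
  simp_rw [collapse_eq_some]
  rw [prod_subtype Tᶜ (fun j => mem_compl) (fun j => #{x | b x = j})]

end Collapse

section Connecting

variable [DecidableEq β]

lemma card_le_sum_card_sub_one_of_iSup_sup_ker_eq_top [Fintype β] {k : ℕ} {b : α → β}
    (hb : Function.Surjective b) {W : Fin k → Finset α} (hW : ∀ i, (W i).Nonempty)
    (h : (⨆ i, tauSetoid (W i)) ⊔ Setoid.ker b = ⊤) :
    Fintype.card β ≤ ∑ i, (#(W i) - 1) + 1 := by
  induction k generalizing β with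
  | zero =>
    rw [iSup_of_empty, bot_sup_eq, Setoid.eq_top_iff] at h
    simpa using Fintype.card_le_one_iff.2 fun j j' => by
      obtain ⟨x, rfl⟩ := hb j
      obtain ⟨y, rfl⟩ := hb j'
      exact h x y
  | succ k ih =>
    set T := (W 0).image b
    rw [iSup_fin_succ, sup_comm (tauSetoid _), sup_assoc, tauSetoid_sup_ker_eq_ker_collapse] at h
    have hT : T.Nonempty := (hW 0).image b
    have := ih ((collapse_surjective hT).comp hb) (fun i => hW i.succ) h
    have hTW : #T ≤ #(W 0) := card_image_le
    have hTβ : #T ≤ Fintype.card β := card_le_univ T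
    rw [card_option_notMem] at this
    rw [Fin.sum_univ_succ]
    have := hT.card_pos
    omega

def connectingTuples {k : ℕ} (b : α → β) (m : Fin k → ℕ) : Set (Fin k → Finset α) :=
  {W | (∀ i, #(W i) = m i) ∧ (⨆ i, tauSetoid (W i)) ⊔ Setoid.ker b = ⊤}

lemma cons_mem_connectingTuples_iff {k : ℕ} {b : α → β} {m : Fin (k + 1) → ℕ} {W₀ : Finset α}
    {V : Fin k → Finset α} :
    Fin.cons W₀ V ∈ connectingTuples b m ↔
      #W₀ = m 0 ∧ V ∈ connectingTuples (collapse (W₀.image b) ∘ b) (Fin.tail m) := by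
  simp only [connectingTuples, Set.mem_ofPred_eq, Fin.forall_fin_succ, iSup_fin_succ,
    Fin.cons_zero, Fin.cons_succ, and_assoc]
  rw [sup_comm (tauSetoid W₀), sup_assoc, tauSetoid_sup_ker_eq_ker_collapse]
  rfl

lemma natCard_connectingTuples_succ [Fintype α] {k : ℕ} (b : α → β) (m : Fin (k + 1) → ℕ) :
    Nat.card (connectingTuples b m) =
      ∑ W₀ with #W₀ = m 0,
        Nat.card (connectingTuples (collapse (W₀.image b) ∘ b) (Fin.tail m)) := by
  let e : connectingTuples b m ≃ Σ W₀, {V // Fin.cons W₀ V ∈ connectingTuples b m} :=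
    { toFun W := ⟨W.1 0, Fin.tail W.1, by simpa only [Fin.cons_self_tail] using W.2⟩
      invFun p := ⟨Fin.cons p.1 p.2.1, p.2.2⟩
      left_inv W := Subtype.ext (Fin.cons_self_tail W.1)
      right_inv p := rfl }
  rw [Nat.card_congr e, Nat.card_sigma, sum_filter]
  refine sum_congr rfl fun W₀ _ => ?_
  simp_rw [cons_mem_connectingTuples_iff]
  split_ifs with h <;> simp [h]

end Connecting

section Transversals

variable [Fintype α] [DecidableEq β]

lemma card_filter_image_eq [DecidableEq α] (b : α → β) (T : Finset β) :
    #{W : Finset α | #W = #T ∧ W.image b = T} = ∏ t ∈ T, #{x | b x = t} := by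
  set sections := Fintype.piFinset fun t : T => ({x | b x = t} : Finset α)
  have hb {g} (hg : g ∈ sections) (t : T) : b (g t) = t := by
    simpa [sections] using Fintype.mem_piFinset.1 hg t
  have hinj {g} (hg : g ∈ sections) : Function.Injective g := fun t t' h =>
    Subtype.ext <| by rw [← hb hg t, ← hb hg t', h]
  have himage {g} (hg : g ∈ sections) : (univ.image g).image b = T := by
    ext t
    simp only [image_image, mem_image, mem_univ, true_and, Function.comp_apply, hb hg]
    exact ⟨fun ⟨s, hs⟩ => hs ▸ s.2, fun ht => ⟨⟨t, ht⟩, rfl⟩⟩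
  have hfilter : ({W : Finset α | #W = #T ∧ W.image b = T} : Finset _) =
      sections.image (univ.image ·) := by
    ext W
    simp only [mem_filter, mem_univ, true_and, mem_image]
    constructor
    · rintro ⟨hcard, rfl⟩
      have hex (t : W.image b) : ∃ x ∈ W, b x = t := mem_image.1 t.2
      choose g hgW hgb using hex
      have hg : g ∈ sections := Fintype.mem_piFinset.2 fun t => by simp [hgb]
      refine ⟨g, hg, eq_of_subset_of_card_le (fun x => ?_) ?_⟩
      · simp only [mem_image, mem_univ, true_and]
        rintro ⟨t, rfl⟩
        exact hgW t
      · rw [card_image_of_injective _ (hinj hg), card_univ, Fintype.card_coe, hcard]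
    · rintro ⟨g, hg, rfl⟩
      rw [card_image_of_injective _ (hinj hg), card_univ, Fintype.card_coe]
      exact ⟨rfl, himage hg⟩
  rw [hfilter, card_image_of_injOn, Fintype.card_piFinset]
  · exact prod_coe_sort T fun t => #{x | b x = t}
  intro g hg g' hg' h
  funext t
  have hmem : g t ∈ univ.image g' := by
    rw [← show univ.image g = univ.image g' from h]
    exact mem_image_of_mem g (mem_univ t)
  obtain ⟨t', -, ht'⟩ := mem_image.1 hmem
  rw [← ht', show t' = t from Subtype.ext (by rw [← hb hg' t', ht', hb hg t])]

lemma sum_filter_card_image_eq [Fintype β] (b : α → β) (m : ℕ) (f : Finset β → ℕ) :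
    ∑ W with #W = m ∧ #(W.image b) = m, f (W.image b) =
      ∑ T ∈ powersetCard m univ, (∏ t ∈ T, #{x | b x = t}) * f T := by
  classical
  rw [← sum_fiberwise_of_maps_to (t := powersetCard m univ) (g := (image b ·))
    (fun W hW => mem_powersetCard_univ.2 (mem_filter.1 hW).2.2)]
  refine sum_congr rfl fun T hT => ?_
  rw [← card_filter_image_eq, sum_congr rfl fun W hW => by rw [(mem_filter.1 hW).2], sum_const,
    smul_eq_mul, filter_filter]
  congr 3
  ext W
  rw [mem_powersetCard_univ] at hT
  constructor
  · rintro ⟨⟨h, -⟩, rfl⟩; exact ⟨hT ▸ h, rfl⟩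
  · rintro ⟨h, rfl⟩; exact ⟨⟨hT ▸ h, hT⟩, rfl⟩

end Transversals

lemma sum_powersetCard_sum [Fintype β] [DecidableEq β] {m : ℕ} (hm : 1 ≤ m) (f : β → ℕ) :
    ∑ T ∈ powersetCard m univ, ∑ t ∈ T, f t = (Fintype.card β - 1).choose (m - 1) * ∑ t, f t := by
  rw [sum_comm' (t' := univ) (s' := fun t => {T ∈ powersetCard m univ | {t} ⊆ T})
    (fun T t => by simp), mul_sum]
  refine sum_congr rfl fun t _ => ?_
  rw [sum_const, smul_eq_mul, card_filter_powersetCard_subset _ _ _ (subset_univ _)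
    (by simpa using hm), card_singleton, card_univ]

lemma multinomial_univ_fin_succ {k : ℕ} (f : Fin (k + 1) → ℕ) :
    Nat.multinomial univ f = (∑ i, f i).choose (f 0) * Nat.multinomial univ (f ∘ Fin.succ) := by
  rw [Fin.univ_succ, Nat.multinomial_cons, sum_cons, sum_map]
  simp [Nat.multinomial]

section Count

variable [Fintype β] [DecidableEq β]

lemma connectingTuples_collapse_eq_empty {k : ℕ} {b : α → β} (hb : Function.Surjective b)
    {m : Fin (k + 1) → ℕ} (hm : ∀ i, 1 ≤ m i) (hsum : ∑ i, (m i - 1) + 1 = Fintype.card β)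
    {W₀ : Finset α} (hW₀ : #W₀ = m 0) (hT : #(W₀.image b) ≠ m 0) :
    connectingTuples (collapse (W₀.image b) ∘ b) (Fin.tail m) = ∅ := by
  refine Set.eq_empty_of_forall_notMem fun V ⟨hcard, htop⟩ => ?_
  have hTne : (W₀.image b).Nonempty := (card_pos.1 (hW₀ ▸ hm 0)).image b
  have hle := card_le_sum_card_sub_one_of_iSup_sup_ker_eq_top
    ((collapse_surjective hTne).comp hb) (fun i => card_pos.1 ((hcard i).symm ▸ hm i.succ)) htop
  simp only [hcard, card_option_notMem, Fin.tail] at hle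
  have : #(W₀.image b) ≤ #W₀ := card_image_le
  have := hm 0
  rw [Fin.sum_univ_succ] at hsum
  omega

theorem natCard_connectingTuples_mul_card [Fintype α] {k : ℕ} {b : α → β}
    (hb : Function.Surjective b) {m : Fin k → ℕ} (hm : ∀ i, 1 ≤ m i)
    (hsum : ∑ i, (m i - 1) + 1 = Fintype.card β) :
    Nat.card (connectingTuples b m) * Fintype.card α =
      (∏ j, #{x | b x = j}) * Nat.multinomial univ (fun i => m i - 1) * Fintype.card α ^ k := by
  induction k generalizing β with
  | zero =>
    obtain ⟨j₀, hj₀⟩ := Fintype.card_eq_one_iff.1 (by simpa using hsum.symm)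
    have : connectingTuples b m = Set.univ := by
      ext W
      simp [connectingTuples, Setoid.eq_top_iff, Setoid.ker_def, hj₀ (b _)]
    simp [this, Fintype.prod_eq_single j₀ fun j hj => absurd (hj₀ j) hj, hj₀ (b _)]
  | succ k ih =>
    classical
    set fib : β → ℕ := fun j => #{x | b x = j}
    set C := Nat.multinomial univ (fun i => Fin.tail m i - 1)
    set G : Finset β → ℕ := fun T =>
      (∑ t ∈ T, fib t) * (∏ j ∈ Tᶜ, fib j) * C * Fintype.card α ^ k
    have hfib : ∑ j, fib j = Fintype.card α := by
      rw [← card_univ, card_eq_sum_card_fiberwise fun x _ => mem_univ (b x)]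
    have hterm (W₀ : Finset α) (hW₀ : #W₀ = m 0) :
        Nat.card (connectingTuples (collapse (W₀.image b) ∘ b) (Fin.tail m)) * Fintype.card α =
          if #(W₀.image b) = m 0 then G (W₀.image b) else 0 := by
      split_ifs with hT
      · have hTne : (W₀.image b).Nonempty := (card_pos.1 (hW₀ ▸ hm 0)).image b
        have : #(W₀.image b) ≤ Fintype.card β := card_le_univ _
        rw [Fin.sum_univ_succ] at hsum
        rw [ih ((collapse_surjective hTne).comp hb) (m := Fin.tail m) (fun i => hm i.succ)
          (by rw [card_option_notMem]; simp only [Fin.tail]; have := hm 0; omega)]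
        exact congrArg (· * _ * _) (prod_card_filter_collapse b _)
      · simp [connectingTuples_collapse_eq_empty hb hm hsum hW₀ hT]
    calc Nat.card (connectingTuples b m) * Fintype.card α
        = ∑ W₀ with #W₀ = m 0, if #(W₀.image b) = m 0 then G (W₀.image b) else 0 := by
          rw [natCard_connectingTuples_succ, sum_mul]
          exact sum_congr rfl fun W₀ hW₀ => hterm W₀ (mem_filter.1 hW₀).2
      _ = ∑ T ∈ powersetCard (m 0) univ, (∏ t ∈ T, fib t) * G T := by
          rw [sum_ite, sum_const_zero, add_zero, filter_filter, sum_filter_card_image_eq]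
      _ = (∏ j, fib j) * C * Fintype.card α ^ k *
            ∑ T ∈ powersetCard (m 0) univ, ∑ t ∈ T, fib t := by
          rw [mul_sum]
          refine sum_congr rfl fun T _ => ?_
          rw [← prod_mul_prod_compl T fib]
          ring
      _ = _ := by
          rw [sum_powersetCard_sum (hm 0), hfib, multinomial_univ_fin_succ,
            ← Nat.eq_sub_of_add_eq hsum]
          simp only [Function.comp_def, Fin.tail, C]
          ring

end Count

section Interval

variable {n : ℕ} (l : Fin n → ℕ)

lemma sum_castLE_eq_sum_filter_lt (i : Fin n) :
    ∑ j : Fin i, l (Fin.castLE i.2.le j) = ∑ j with j < i, l j := by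
  change ∑ j, l (Fin.castLEEmb i.2.le j) = _
  rw [← sum_map univ (Fin.castLEEmb i.2.le)]
  congr 1
  ext j
  simp only [Finset.mem_map, mem_univ, true_and, mem_filter, Fin.lt_def]
  exact ⟨by rintro ⟨a, rfl⟩; exact a.2, fun hj => ⟨⟨j, hj⟩, rfl⟩⟩

def blockIndex (x : Fin (∑ j, l j)) : Fin n := (finSigmaFinEquiv.symm x).1

lemma card_filter_sum_lt_le_finSigmaFinEquiv (s : Σ i, Fin (l i)) :
    #{i | ∑ j with j < i, l j ≤ (finSigmaFinEquiv s : ℕ)} = s.1 + 1 := by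
  rw [← Fin.card_Iic s.1]
  congr 1
  ext i
  rw [finSigmaFinEquiv_apply, sum_castLE_eq_sum_filter_lt, mem_filter, mem_Iic]
  simp only [mem_univ, true_and]
  constructor
  · intro h
    by_contra hlt
    have hsub : insert s.1 ({j | j < s.1} : Finset _) ⊆ ({j | j < i} : Finset _) := by
      intro j
      simp only [mem_insert, mem_filter, mem_univ, true_and]
      rintro (rfl | hj) <;> [exact not_le.1 hlt; exact hj.trans (not_le.1 hlt)]
    have := sum_le_sum_of_subset hsub (f := l)
    rw [sum_insert (by simp)] at this
    have := s.2.2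
    omega
  · intro h
    refine le_add_right (sum_le_sum_of_subset fun j => ?_)
    simp only [mem_filter, mem_univ, true_and]
    exact fun hj => hj.trans_le h

lemma intervalSetoid_eq_ker_blockIndex :
    intervalSetoid n (∑ j, l j) l = Setoid.ker (blockIndex l) := by
  ext x y
  rw [intervalSetoid, Setoid.ker_def, Setoid.ker_def, ← finSigmaFinEquiv.apply_symm_apply x,
    ← finSigmaFinEquiv.apply_symm_apply y, card_filter_sum_lt_le_finSigmaFinEquiv,
    card_filter_sum_lt_le_finSigmaFinEquiv, blockIndex, blockIndex, Equiv.symm_apply_apply,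
    Equiv.symm_apply_apply, add_left_inj, Fin.val_inj]

lemma card_filter_blockIndex_eq (j : Fin n) : #{x | blockIndex l x = j} = l j := by
  rw [← Fintype.card_subtype, ← Fintype.card_fin (l j)]
  exact Fintype.card_congr ((finSigmaFinEquiv.symm.subtypeEquiv fun _ => Iff.rfl).trans
    (Equiv.sigmaSubtype j))

lemma blockIndex_surjective (hl : ∀ j, 1 ≤ l j) : Function.Surjective (blockIndex l) :=
  fun j => ⟨finSigmaFinEquiv ⟨j, ⟨0, hl j⟩⟩, by simp [blockIndex]⟩

end Interval

theorem statement4 (k : ℕ) (hk : 1 ≤ k) (m : Fin k → ℕ) (hm : ∀ i, 1 ≤ m i)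
    (M : ℕ) (hM : M = ∑ i, m i) (n : ℕ) (hn : n = M - (k - 1))
    (l : Fin n → ℕ) (hl : ∀ j, 1 ≤ l j) (L : ℕ) (hL : L = ∑ j, l j) :
    Nat.card {W : Fin k → Finset (Fin L) //
        (∀ i, (W i).card = m i) ∧
        (⨆ i, tauSetoid (W i)) ⊔ intervalSetoid n L l = ⊤} =
      (∏ j, l j) * Nat.multinomial Finset.univ (fun i => m i - 1) * (∑ j, l j) ^ (k - 1) := by
  subst hL
  obtain ⟨k, rfl⟩ : ∃ k', k = k' + 1 := ⟨k - 1, by omega⟩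
  rw [Nat.add_sub_cancel] at hn ⊢
  have hsum : ∑ i, (m i - 1) + 1 = n := by
    have : ∑ i, (m i - 1) + ∑ _i : Fin (k + 1), 1 = M := by
      rw [hM, ← sum_add_distrib]
      exact sum_congr rfl fun i _ => Nat.sub_add_cancel (hm i)
    simp only [sum_const, card_univ, Fintype.card_fin, smul_eq_mul, mul_one] at this
    omega
  have : Nonempty (Fin n) := ⟨⟨0, by omega⟩⟩
  have hcount := natCard_connectingTuples_mul_card (blockIndex_surjective l hl) hm
    (hsum.trans (Fintype.card_fin n).symm)
  simp only [card_filter_blockIndex_eq, Fintype.card_fin] at hcount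
  rw [intervalSetoid_eq_ker_blockIndex]
  refine Nat.eq_of_mul_eq_mul_right (sum_pos (fun j _ => hl j) univ_nonempty) (hcount.trans ?_)
  ring
end

section
/- Let d ≥ 1, let m ≥ 1, let p_1, …, p_m be monic complex polynomials of degree d, and let 1 ≤ n ≤ d. Then κ_n^{(d)}(p_1 ⊠_d ⋯ ⊠_d p_m) = ((−d)^{n−1}/(n−1)!) · Σ over all m-tuples (σ_1,…,σ_m) ∈ P(n)^m with σ_1 ∨ ⋯ ∨ σ_m = 1_n of ∏_{i=1}^m [ d^{|σ_i|−n} · μ_n(0_n, σ_i) · κ_{σ_i}^{(d)}(p_i) ], where κ_σ^{(d)}(p) := ∏_{V∈σ} κ_{|V|}^{(d)}(p). -/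
open Finset Filter

def Finpartition.toSetoidUniv {α : Type*} [Fintype α] [DecidableEq α]
    (P : Finpartition (Finset.univ : Finset α)) : Setoid α where
  r a b := ∃ V ∈ P.parts, a ∈ V ∧ b ∈ V
  iseqv := by
    constructor
    · intro a
      obtain ⟨V, hV, haV⟩ := P.exists_mem (Finset.mem_univ a)
      exact ⟨V, hV, haV, haV⟩
    · rintro a b ⟨V, hV, h1, h2⟩
      exact ⟨V, hV, h2, h1⟩
    · rintro a b c ⟨V, hV, h1, h2⟩ ⟨U, hU, h3, h4⟩
      exact ⟨V, hV, h1, (P.eq_of_mem_parts hV hU h2 h3) ▸ h4⟩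

/-- For `p(x) = Σ_{i=0}^d a_i x^{d-i}`, `atilde d p i = (-1)^i * (d.choose i)⁻¹ * a_i`. -/
noncomputable def atilde (d : ℕ) (p : Polynomial ℂ) (i : ℕ) : ℂ :=
  (-1) ^ i * ((d.choose i : ℂ))⁻¹ * p.coeff (d - i)

/-- The `n`-th finite free cumulant of a monic complex polynomial of degree `d`. -/
noncomputable def ffcumulant (d n : ℕ) (p : Polynomial ℂ) : ℂ :=
  (-(d : ℂ)) ^ (n - 1) / (Nat.factorial (n - 1) : ℂ) *
    ∑ π : Finpartition (Finset.univ : Finset (Fin n)),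
      (∏ V ∈ π.parts, atilde d p V.card) *
        ((-1) ^ (π.parts.card - 1) * (Nat.factorial (π.parts.card - 1) : ℂ))

/-- Finite free multiplicative convolution of degree-`d` polynomials. -/
noncomputable def ffmul (d : ℕ) (p q : Polynomial ℂ) : Polynomial ℂ :=
  ∑ i ∈ Finset.range (d + 1),
    Polynomial.C ((-1) ^ i * (d.choose i : ℂ) * atilde d p i * atilde d q i) *
      Polynomial.X ^ (d - i)

/-- The `m`-fold finite free multiplicative convolution power `p^{⊠_d m}`;
the empty convolution is the identity `(x-1)^d` for `⊠_d`. -/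
noncomputable def ffpow (d : ℕ) (p : Polynomial ℂ) : ℕ → Polynomial ℂ
  | 0 => (Polynomial.X - 1) ^ d
  | m + 1 => ffmul d (ffpow d p m) p

/-- Finite free multiplicative convolution `p 0 ⊠_d ⋯ ⊠_d p (m-1)` of a family. -/
noncomputable def ffconv (d m : ℕ) (p : Fin m → Polynomial ℂ) : Polynomial ℂ :=
  (List.ofFn p).foldr (ffmul d) ((Polynomial.X - 1) ^ d)

/-!
`ã_i` is multiplicative under `⊠_d`, so `ã_π(p_1 ⊠ ⋯ ⊠ p_m) = ∏_i ã_π(p_i)`. Möbius inversion in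
the partition lattice expands each `ã_π(p_i)` as a sum over `σ_i ≤ π` of products of rescaled
cumulants over the blocks of `σ_i`. Substituting into the definition of `κ_n` and exchanging the
sums, the tuple `(σ_1, …, σ_m)` gets the coefficient `∑_{π ≥ σ_1 ∨ ⋯ ∨ σ_m} μ(π, 1_n)`, which is
`1` if the join is `1_n` and `0` otherwise.

Both Möbius identities rest on `∑_{π ∈ P(s)} μ(0, π) = [#s ≤ 1]`, proved by splitting off the
block that contains a fixed point; the identity for `∑_{π ≥ ρ} μ(π, 1)` is obtained from its dual
`∑_{τ ≤ ρ ≤ σ} μ(τ, ρ) = δ(τ, σ)` because a one-sided inverse of a finite matrix is two-sided.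
-/

open Polynomial

theorem atilde_ffmul {d i : ℕ} (hi : i ≤ d) (p q : ℂ[X]) :
    atilde d (ffmul d p q) i = atilde d p i * atilde d q i := by
  have hchoose : (d.choose i : ℂ) ≠ 0 := Nat.cast_ne_zero.mpr (Nat.choose_pos hi).ne'
  have hcoeff : (ffmul d p q).coeff (d - i) =
      (-1) ^ i * (d.choose i : ℂ) * atilde d p i * atilde d q i := by
    rw [ffmul, finsetSum_coeff, sum_eq_single i]
    · rw [coeff_C_mul, coeff_X_pow, if_pos rfl, mul_one]
    · intro j hj hji
      rw [coeff_C_mul, coeff_X_pow, if_neg (by rw [mem_range] at hj; omega), mul_zero]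
    · exact fun h => absurd (mem_range.mpr (by omega)) h
  rw [atilde, hcoeff]
  field_simp
  rw [← pow_mul, mul_comm i 2, pow_mul, neg_one_sq, one_pow, one_mul]

theorem atilde_X_sub_one_pow {d i : ℕ} (hi : i ≤ d) : atilde d ((X - 1 : ℂ[X]) ^ d) i = 1 := by
  have hchoose : (d.choose i : ℂ) ≠ 0 := Nat.cast_ne_zero.mpr (Nat.choose_pos hi).ne'
  rw [atilde, sub_eq_add_neg, ← C_1, ← C_neg, coeff_X_add_C_pow, Nat.sub_sub_self hi,
    Nat.choose_symm hi]
  field_simp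
  rw [← pow_mul, mul_comm i 2, pow_mul, neg_one_sq, one_pow]

theorem atilde_ffconv {d i : ℕ} (hi : i ≤ d) {m : ℕ} (p : Fin m → ℂ[X]) :
    atilde d (ffconv d m p) i = ∏ j, atilde d (p j) i := by
  suffices ∀ l : List ℂ[X], atilde d (l.foldr (ffmul d) ((X - 1) ^ d)) i =
      (l.map fun q => atilde d q i).prod by
    rw [ffconv, this, List.map_ofFn, List.prod_ofFn]; rfl
  intro l
  induction l with
  | nil => exact atilde_X_sub_one_pow hi
  | cons q l ih => rw [List.foldr_cons, atilde_ffmul hi, ih, List.map_cons, List.prod_cons]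

open scoped Nat

/-- `μ(π, 1)` in the lattice of set partitions, for a partition `π` with `k` blocks. -/
noncomputable def moebiusTop (k : ℕ) : ℂ := (-1) ^ (k - 1) * (k - 1)!

theorem moebiusTop_succ_add_mul (N : ℕ) :
    moebiusTop (N + 1) + N * moebiusTop N = if N = 0 then 1 else 0 := by
  rcases N with _ | _ | j
  · simp [moebiusTop]
  · simp [moebiusTop]
  · simp only [moebiusTop, Nat.add_sub_cancel, Nat.factorial_succ]
    push_cast
    ring

/-- The `(n-1)! / (-d)^(n-1)`-multiple of `κ_n`, with `f i` in the role of `ã_i` and the ground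
set `t` in the role of `{1, …, n}`. -/
noncomputable def cumulant (f : ℕ → ℂ) {β : Type*} [DecidableEq β] (t : Finset β) : ℂ :=
  ∑ R : Finpartition t, (∏ V ∈ R.parts, f #V) * moebiusTop #R.parts

namespace Finpartition

variable {α : Type*} [DecidableEq α] {s t : Finset α}

/-- `μ(0, π)`. -/
noncomputable def moebiusBot (π : Finpartition s) : ℂ := ∏ V ∈ π.parts, moebiusTop #V

theorem extend_avoid_part (π : Finpartition s) {a : α} (ha : a ∈ s) (h₁ : π.part a ≠ ⊥)
    (h₂ : Disjoint (s \ π.part a) (π.part a)) (h₃ : (s \ π.part a) ⊔ π.part a = s) :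
    (π.avoid (π.part a)).extend h₁ h₂ h₃ = π := by
  have hmem : π.part a ∈ π.parts := π.part_mem.2 ha
  ext V
  simp only [extend, mem_insert, mem_avoid]
  constructor
  · rintro (rfl | ⟨W, hW, hWle, rfl⟩)
    · exact hmem
    · have hd : Disjoint W (π.part a) := π.disjoint hW hmem (by rintro rfl; exact hWle le_rfl)
      rwa [sdiff_eq_self_of_disjoint hd]
  · intro hV
    rcases eq_or_ne V (π.part a) with rfl | hne
    · exact Or.inl rfl
    · have hd : Disjoint V (π.part a) := π.disjoint hV hmem hne
      refine Or.inr ⟨V, hV, fun hle => π.ne_bot hV ?_, sdiff_eq_self_of_disjoint hd⟩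
      exact disjoint_self.1 (hd.mono_right hle)

theorem avoid_extend (P : Finpartition (s \ t)) (h₁ : t ≠ ⊥) (h₂ : Disjoint (s \ t) t)
    (h₃ : (s \ t) ⊔ t = s) : (P.extend h₁ h₂ h₃).avoid t = P := by
  have hdisj : ∀ V ∈ P.parts, Disjoint V t := fun V hV => h₂.mono_left (P.le hV)
  ext V
  simp only [mem_avoid, extend, mem_insert]
  constructor
  · rintro ⟨W, rfl | hW, hWle, rfl⟩
    · exact absurd le_rfl hWle
    · rwa [sdiff_eq_self_of_disjoint (hdisj W hW)]
  · intro hV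
    refine ⟨V, Or.inr hV, fun hle => P.ne_bot hV ?_, sdiff_eq_self_of_disjoint (hdisj V hV)⟩
    exact disjoint_self.1 ((hdisj V hV).mono_right hle)

theorem sum_part_eq_moebiusBot {a : α} (ha : a ∈ t) (hts : t ⊆ s) :
    ∑ π : Finpartition s with π.part a = t, moebiusBot π =
      moebiusTop #t * ∑ P : Finpartition (s \ t), moebiusBot P := by
  have h₁ : t ≠ ⊥ := ne_empty_of_mem ha
  have h₃ : (s \ t) ⊔ t = s := sdiff_union_of_subset hts
  have hpart (P : Finpartition (s \ t)) : (P.extend h₁ sdiff_disjoint h₃).part a = t :=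
    part_eq_of_mem _ (mem_insert_self _ _) ha
  rw [mul_sum]
  refine sum_bij' (fun π hπ => (π.avoid (π.part a)).copy (by rw [(mem_filter.1 hπ).2]))
    (fun P _ => P.extend h₁ sdiff_disjoint h₃) (fun _ _ => mem_univ _) (fun P _ => ?_)
    (fun π hπ => ?_) (fun P _ => ?_) (fun π hπ => ?_)
  · exact mem_filter.2 ⟨mem_univ _, hpart P⟩
  · obtain rfl := (mem_filter.1 hπ).2
    exact extend_avoid_part π (hts ha) _ _ _
  · ext1
    rw [copy_parts, hpart P, avoid_extend]
  · obtain rfl := (mem_filter.1 hπ).2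
    conv_lhs => rw [← extend_avoid_part π (hts ha) h₁ sdiff_disjoint h₃]
    rw [moebiusBot, extend, prod_insert fun h => ?_]
    · rfl
    · obtain ⟨x, hx⟩ := nonempty_iff_ne_empty.2 h₁
      exact (mem_sdiff.1 ((π.avoid _).le h hx)).2 hx

theorem sum_filter_mem_powerset {M : Type*} [AddCommMonoid M] {a : α} (ha : a ∈ s)
    (F : Finset α → M) :
    ∑ t ∈ s.powerset with a ∈ t, F t = ∑ u ∈ (s.erase a).powerset, F (s \ u) := by
  refine sum_nbij' (s \ ·) (s \ ·) (fun t ht => ?_) (fun u hu => ?_) (fun t ht => ?_)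
    (fun u hu => ?_) (fun t ht => ?_)
  · simp only [mem_filter, mem_powerset] at ht
    refine mem_powerset.2 fun x hx => mem_erase.2 ⟨?_, (mem_sdiff.1 hx).1⟩
    rintro rfl
    exact (mem_sdiff.1 hx).2 ht.2
  · simp only [mem_powerset] at hu
    simp only [mem_filter, mem_powerset, sdiff_subset, true_and]
    exact mem_sdiff.2 ⟨ha, fun h => (mem_erase.1 (hu h)).1 rfl⟩
  · exact Finset.sdiff_sdiff_eq_self (mem_powerset.1 (mem_filter.1 ht).1)
  · exact Finset.sdiff_sdiff_eq_self ((mem_powerset.1 hu).trans (erase_subset a s))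
  · rw [Finset.sdiff_sdiff_eq_self (mem_powerset.1 (mem_filter.1 ht).1)]

theorem sum_moebiusBot (s : Finset α) :
    ∑ π : Finpartition s, moebiusBot π = if #s ≤ 1 then 1 else 0 := by
  induction s using Finset.strongInduction with
  | H s ih =>
  obtain rfl | ⟨a, ha⟩ := s.eq_empty_or_nonempty
  · have : Unique (Finpartition (∅ : Finset α)) := inferInstanceAs (Unique (Finpartition ⊥))
    rw [Fintype.sum_unique, moebiusBot, parts_eq_empty_iff.2 rfl]
    simp
  obtain ⟨N, hN⟩ : ∃ N, #s = N + 1 := ⟨#s - 1, by have := card_pos.2 ⟨a, ha⟩; omega⟩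
  calc ∑ π : Finpartition s, moebiusBot π
      = ∑ t ∈ s.powerset with a ∈ t, ∑ π : Finpartition s with π.part a = t, moebiusBot π :=
        (sum_fiberwise_of_maps_to (g := fun π : Finpartition s => π.part a)
          (fun π _ => by simp [π.part_subset, π.mem_part ha]) _).symm
    _ = ∑ t ∈ s.powerset with a ∈ t, moebiusTop #t * if #(s \ t) ≤ 1 then 1 else 0 := by
        refine sum_congr rfl fun t ht => ?_
        obtain ⟨hts, hat⟩ := by simpa only [mem_filter, mem_powerset] using ht
        rw [sum_part_eq_moebiusBot hat hts, ih _ (sdiff_ssubset hts ⟨a, hat⟩)]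
    _ = ∑ u ∈ (s.erase a).powerset, moebiusTop (N + 1 - #u) * if #u ≤ 1 then 1 else 0 := by
        rw [sum_filter_mem_powerset ha]
        refine sum_congr rfl fun u hu => ?_
        have hus : u ⊆ s := (mem_powerset.1 hu).trans (erase_subset a s)
        rw [card_sdiff_of_subset hus, hN, Finset.sdiff_sdiff_eq_self hus]
    _ = moebiusTop (N + 1) + N * moebiusTop N := by
        rw [sum_powerset_apply_card (fun k => moebiusTop (N + 1 - k) * if k ≤ 1 then 1 else 0),
          card_erase_of_mem ha, hN, Nat.add_sub_cancel, sum_eq_add 0 1 zero_ne_one]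
        · simp
        · intro k _ hk
          simp [show ¬ k ≤ 1 by omega]
        · simp
        · intro h
          simp [show N = 0 by simpa using h]
    _ = if #s ≤ 1 then 1 else 0 := by rw [moebiusTop_succ_add_mul, hN]; simp

def restrictOfLE {τ π : Finpartition s} (h : τ ≤ π) {W : Finset α} (hW : W ∈ π.parts) :
    Finpartition W where
  parts := {V ∈ τ.parts | V ⊆ W}
  supIndep := τ.supIndep.subset (filter_subset _ _)
  sup_parts := by
    refine le_antisymm (Finset.sup_le fun V hV => (mem_filter.1 hV).2) fun x hx => ?_
    obtain ⟨V, hV, hxV⟩ := τ.exists_mem (π.le hW hx)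
    obtain ⟨W', hW', hVW'⟩ := h hV
    obtain rfl := π.eq_of_mem_parts hW' hW (hVW' hxV) hx
    exact mem_sup.2 ⟨V, mem_filter.2 ⟨hV, hVW'⟩, hxV⟩
  bot_notMem h := τ.bot_notMem (mem_filter.1 h).1

theorem bind_le (π : Finpartition s) (Q : ∀ W ∈ π.parts, Finpartition W) : π.bind Q ≤ π := by
  intro V hV
  obtain ⟨W, hW, hVW⟩ := mem_bind.1 hV
  exact ⟨W, hW, (Q W hW).le hVW⟩

theorem bind_restrictOfLE {τ π : Finpartition s} (h : τ ≤ π) :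
    π.bind (fun _ hW => restrictOfLE h hW) = τ := by
  ext V
  rw [mem_bind]
  refine ⟨fun ⟨W, hW, hV⟩ => (mem_filter.1 hV).1, fun hV => ?_⟩
  obtain ⟨W, hW, hVW⟩ := h hV
  exact ⟨W, hW, mem_filter.2 ⟨hV, hVW⟩⟩

theorem filter_subset_bind (π : Finpartition s) (Q : ∀ W ∈ π.parts, Finpartition W)
    {W : Finset α} (hW : W ∈ π.parts) : {V ∈ (π.bind Q).parts | V ⊆ W} = (Q W hW).parts := by
  ext V
  rw [mem_filter, mem_bind]
  refine ⟨fun ⟨⟨W', hW', hV⟩, hVW⟩ => ?_, fun hV => ⟨⟨W, hW, hV⟩, (Q W hW).le hV⟩⟩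
  obtain rfl : W' = W := by
    by_contra hne
    obtain ⟨x, hx⟩ := (Q W' hW').nonempty_of_mem_parts hV
    exact disjoint_left.1 (π.disjoint hW' hW hne) ((Q W' hW').le hV hx) (hVW hx)
  exact hV

theorem prod_parts_eq_prod_filter_subset {τ π : Finpartition s} (h : τ ≤ π) (f : Finset α → ℂ) :
    ∏ V ∈ τ.parts, f V = ∏ W ∈ π.parts, ∏ V ∈ τ.parts with V ⊆ W, f V := by
  have hdisj : (π.parts.attach : Set π.parts).PairwiseDisjoint
      fun W => (restrictOfLE h W.2).parts := by
    intro W _ W' _ hne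
    simp only [Function.onFun, restrictOfLE, disjoint_left, mem_filter]
    intro V hV hV'
    obtain ⟨x, hx⟩ := τ.nonempty_of_mem_parts hV.1
    exact disjoint_left.1 (π.disjoint W.2 W'.2 (Subtype.coe_injective.ne hne)) (hV.2 hx) (hV'.2 hx)
  conv_lhs => rw [← bind_restrictOfLE h, bind_parts, prod_biUnion hdisj]
  exact prod_attach π.parts fun W => ∏ V ∈ τ.parts with V ⊆ W, f V

open scoped Classical in
theorem sum_filter_le_prod (π : Finpartition s) (g : Finset (Finset α) → ℂ) :
    ∑ τ : Finpartition s with τ ≤ π, ∏ W ∈ π.parts, g {V ∈ τ.parts | V ⊆ W} =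
      ∏ W ∈ π.parts, ∑ R : Finpartition W, g R.parts := by
  rw [← prod_attach, ← univ_eq_attach, prod_univ_sum]
  refine sum_bij' (fun τ hτ W => restrictOfLE (mem_filter.1 hτ).2 W.2)
    (fun Q _ => π.bind fun W hW => Q ⟨W, hW⟩)
    (fun _ _ => Fintype.mem_piFinset.2 fun _ => mem_univ _)
    (fun Q _ => mem_filter.2 ⟨mem_univ _, bind_le _ _⟩)
    (fun τ hτ => bind_restrictOfLE (mem_filter.1 hτ).2)
    (fun Q _ => funext fun W => Finpartition.ext (filter_subset_bind π _ W.2))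
    (fun τ _ => (prod_attach π.parts _).symm)

/-- `μ(τ, ρ)` for `τ ≤ ρ`: the interval `[τ, ρ]` is the product, over the blocks `W` of `ρ`, of the
partition lattices of the sets of blocks of `τ` inside `W`. -/
noncomputable def moebius (τ ρ : Finpartition s) : ℂ :=
  ∏ W ∈ ρ.parts, moebiusTop #{V ∈ τ.parts | V ⊆ W}

/-- `groupBlocks` and `coarsen` identify `{ρ | τ ≤ ρ}` with the partitions of the set `τ.parts`. -/
def groupBlocks {τ ρ : Finpartition s} (h : τ ≤ ρ) : Finpartition τ.parts where
  parts := ρ.parts.image fun W => {V ∈ τ.parts | V ⊆ W}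
  supIndep := by
    rw [supIndep_iff_pairwiseDisjoint]
    rintro _ hB₁ _ hB₂ hne
    obtain ⟨W₁, hW₁, rfl⟩ := mem_image.1 hB₁
    obtain ⟨W₂, hW₂, rfl⟩ := mem_image.1 hB₂
    have hd : Disjoint W₁ W₂ := ρ.disjoint hW₁ hW₂ fun h => hne (by rw [h])
    simp only [Function.onFun, id_eq, disjoint_left, mem_filter]
    intro V hV hV'
    obtain ⟨x, hx⟩ := τ.nonempty_of_mem_parts hV.1
    exact disjoint_left.1 hd (hV.2 hx) (hV'.2 hx)
  sup_parts := by
    refine le_antisymm (Finset.sup_le fun B hB => ?_) fun V hV => ?_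
    · obtain ⟨W, _, rfl⟩ := mem_image.1 hB
      exact filter_subset _ _
    · obtain ⟨W, hW, hVW⟩ := h hV
      exact mem_sup.2 ⟨_, mem_image_of_mem _ hW, mem_filter.2 ⟨hV, hVW⟩⟩
  bot_notMem := by
    rintro hB
    obtain ⟨W, hW, hB⟩ := mem_image.1 hB
    obtain ⟨V, hV, hVW⟩ := exists_le_of_le h hW
    have : V ∈ (⊥ : Finset (Finset α)) := hB ▸ mem_filter.2 ⟨hV, hVW⟩
    exact notMem_empty V this

def coarsen (τ : Finpartition s) (G : Finpartition τ.parts) : Finpartition s where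
  parts := G.parts.image fun B => B.sup id
  supIndep := by
    rw [supIndep_iff_pairwiseDisjoint]
    rintro _ hx _ hy hne
    obtain ⟨B₁, hB₁, rfl⟩ := mem_image.1 hx
    obtain ⟨B₂, hB₂, rfl⟩ := mem_image.1 hy
    have hBd : Disjoint B₁ B₂ := G.disjoint hB₁ hB₂ fun h => hne (by rw [h])
    simp only [Function.onFun, id_eq]
    rw [Finset.disjoint_sup_left]
    intro V hV
    rw [Finset.disjoint_sup_right]
    intro V' hV'
    exact τ.disjoint (G.le hB₁ hV) (G.le hB₂ hV') fun h => disjoint_left.1 hBd hV (h ▸ hV')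
  sup_parts := by
    refine le_antisymm (Finset.sup_le fun x hx => ?_) fun x hx => ?_
    · obtain ⟨B, hB, rfl⟩ := mem_image.1 hx
      exact Finset.sup_le fun V hV => τ.le (G.le hB hV)
    · obtain ⟨V, hV, hxV⟩ := τ.exists_mem hx
      obtain ⟨B, hB, hVB⟩ := G.exists_mem hV
      exact mem_sup.2 ⟨B.sup id, mem_image_of_mem _ hB, le_sup (f := id) hVB hxV⟩
  bot_notMem := by
    rintro hB
    obtain ⟨B, hB, hBs⟩ := mem_image.1 hB
    obtain ⟨V, hV⟩ := G.nonempty_of_mem_parts hB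
    obtain ⟨x, hx⟩ := τ.nonempty_of_mem_parts (G.le hB hV)
    have : x ∈ (⊥ : Finset α) := hBs ▸ le_sup (f := id) hV hx
    exact notMem_empty x this

section Grouping

variable {τ ρ : Finpartition s}

theorem sup_filter_subset (h : τ ≤ ρ) {W : Finset α} (hW : W ∈ ρ.parts) :
    {V ∈ τ.parts | V ⊆ W}.sup id = W :=
  (restrictOfLE h hW).sup_parts

theorem injOn_filter_subset (h : τ ≤ ρ) : Set.InjOn (fun W => {V ∈ τ.parts | V ⊆ W}) ρ.parts :=
  fun W₁ h₁ W₂ h₂ he => by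
    rw [← sup_filter_subset h h₁, ← sup_filter_subset h h₂]
    exact congrArg (Finset.sup · id) he

theorem moebius_eq_moebiusBot_groupBlocks (h : τ ≤ ρ) :
    moebius τ ρ = moebiusBot (groupBlocks h) :=
  (prod_image (f := fun B => moebiusTop #B) (injOn_filter_subset h)).symm

theorem le_coarsen (τ : Finpartition s) (G : Finpartition τ.parts) : τ ≤ coarsen τ G := by
  intro V hV
  obtain ⟨B, hB, hVB⟩ := G.exists_mem hV
  exact ⟨B.sup id, mem_image_of_mem _ hB, le_sup (f := id) hVB⟩

theorem filter_subset_sup (τ : Finpartition s) (G : Finpartition τ.parts) {B : Finset (Finset α)}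
    (hB : B ∈ G.parts) : {V ∈ τ.parts | V ⊆ B.sup id} = B := by
  ext V
  rw [mem_filter]
  refine ⟨fun ⟨hV, hVB⟩ => ?_, fun hV => ⟨G.le hB hV, le_sup (f := id) hV⟩⟩
  obtain ⟨B', hB', hVB'⟩ := G.exists_mem hV
  by_contra hVB₀
  have hne : B' ≠ B := by rintro rfl; exact hVB₀ hVB'
  have hVd : Disjoint V (B.sup id) := by
    refine Finset.disjoint_sup_right.2 fun W hW => τ.disjoint hV (G.le hB hW) ?_
    rintro rfl
    exact disjoint_left.1 (G.disjoint hB' hB hne) hVB' hW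
  exact τ.ne_bot hV (disjoint_self.1 (hVd.mono_right hVB))

theorem coarsen_groupBlocks (h : τ ≤ ρ) : coarsen τ (groupBlocks h) = ρ := by
  ext W
  simp only [coarsen, groupBlocks, image_image]
  refine ⟨fun hW => ?_, fun hW => mem_image.2 ⟨W, hW, sup_filter_subset h hW⟩⟩
  obtain ⟨W', hW', rfl⟩ := mem_image.1 hW
  rwa [Function.comp_apply, sup_filter_subset h hW']

theorem groupBlocks_coarsen (τ : Finpartition s) (G : Finpartition τ.parts) :
    groupBlocks (le_coarsen τ G) = G := by
  ext B
  simp only [coarsen, groupBlocks, image_image]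
  refine ⟨fun hB => ?_, fun hB => mem_image.2 ⟨B, hB, filter_subset_sup τ G hB⟩⟩
  obtain ⟨B', hB', rfl⟩ := mem_image.1 hB
  rwa [Function.comp_apply, filter_subset_sup τ G hB']

theorem groupBlocks_le_groupBlocks_iff {ρ' : Finpartition s} (h : τ ≤ ρ) (h' : τ ≤ ρ') :
    groupBlocks h ≤ groupBlocks h' ↔ ρ ≤ ρ' := by
  constructor
  · intro hG W hW
    obtain ⟨_, hB', hBB'⟩ := hG (mem_image_of_mem _ hW)
    obtain ⟨W', hW', rfl⟩ := mem_image.1 hB'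
    refine ⟨W', hW', ?_⟩
    rw [← sup_filter_subset h hW, ← sup_filter_subset h' hW']
    exact Finset.sup_mono hBB'
  · intro hρ B hB
    obtain ⟨W, hW, rfl⟩ := mem_image.1 hB
    obtain ⟨W', hW', hWW'⟩ := hρ hW
    refine ⟨_, mem_image_of_mem _ hW', fun V hV => ?_⟩
    rw [mem_filter] at hV ⊢
    exact ⟨hV.1, hV.2.trans hWW'⟩

end Grouping

theorem filter_subset_eq_singleton (π : Finpartition s) {W : Finset α} (hW : W ∈ π.parts) :
    {V ∈ π.parts | V ⊆ W} = {W} := by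
  ext V
  simp only [mem_filter, mem_singleton]
  refine ⟨fun ⟨hV, hVW⟩ => ?_, by rintro rfl; exact ⟨hW, subset_rfl⟩⟩
  by_contra hne
  exact π.ne_bot hV (disjoint_self.1 ((π.disjoint hV hW hne : Disjoint V W).mono_right hVW))

theorem eq_of_le_of_card_filter_subset_le_one {τ σ : Finpartition s} (h : τ ≤ σ)
    (hcard : ∀ W ∈ σ.parts, #{V ∈ τ.parts | V ⊆ W} ≤ 1) : τ = σ := by
  refine le_antisymm h fun W hW => ?_
  obtain ⟨V, hV, hVW⟩ := exists_le_of_le h hW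
  have hmem : V ∈ {V ∈ τ.parts | V ⊆ W} := mem_filter.2 ⟨hV, hVW⟩
  have hsingle : {V ∈ τ.parts | V ⊆ W} = {V} :=
    eq_singleton_iff_unique_mem.2 ⟨hmem, fun U hU => card_le_one.1 (hcard W hW) U hU V hmem⟩
  refine ⟨V, hV, le_of_eq ?_⟩
  rw [← sup_filter_subset h hW, hsingle, sup_singleton, id]

open scoped Classical in
theorem sum_moebius_Icc (τ σ : Finpartition s) :
    ∑ ρ : Finpartition s with τ ≤ ρ ∧ ρ ≤ σ, moebius τ ρ = if τ = σ then 1 else 0 := by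
  by_cases h : τ ≤ σ
  swap
  · rw [if_neg (fun he => h he.le), sum_eq_zero]
    intro ρ hρ
    exact absurd ((mem_filter.1 hρ).2.1.trans (mem_filter.1 hρ).2.2) h
  calc _ = ∑ G : Finpartition τ.parts with G ≤ groupBlocks h, moebiusBot G := by
        refine sum_bij' (fun ρ hρ => groupBlocks (mem_filter.1 hρ).2.1) (fun G _ => coarsen τ G)
          (fun ρ hρ => ?_) (fun G hG => ?_) (fun ρ _ => coarsen_groupBlocks _)
          (fun G _ => groupBlocks_coarsen τ G) (fun ρ _ => moebius_eq_moebiusBot_groupBlocks _)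
        · obtain ⟨-, hτρ, hρσ⟩ := mem_filter.1 hρ
          exact mem_filter.2 ⟨mem_univ _, (groupBlocks_le_groupBlocks_iff hτρ h).2 hρσ⟩
        · rw [mem_filter, ← groupBlocks_coarsen τ G, groupBlocks_le_groupBlocks_iff] at hG
          exact mem_filter.2 ⟨mem_univ _, le_coarsen τ G, hG.2⟩
    _ = ∏ B ∈ (groupBlocks h).parts, ∑ R : Finpartition B, moebiusBot R := by
        refine (sum_congr rfl fun G hG => ?_).trans
          (sum_filter_le_prod (groupBlocks h) fun R => ∏ B ∈ R, moebiusTop #B)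
        exact prod_parts_eq_prod_filter_subset (mem_filter.1 hG).2 _
    _ = ∏ B ∈ (groupBlocks h).parts, if #B ≤ 1 then 1 else 0 :=
        prod_congr rfl fun B _ => sum_moebiusBot B
    _ = if τ = σ then 1 else 0 := by
        rw [prod_boole]
        congr 1
        simp only [groupBlocks, forall_mem_image, eq_iff_iff]
        refine ⟨eq_of_le_of_card_filter_subset_le_one h, ?_⟩
        rintro rfl W hW
        rw [filter_subset_eq_singleton τ hW, card_singleton]

open scoped Classical in
theorem sum_moebius_Icc_right (ρ σ : Finpartition s) :
    ∑ π : Finpartition s with ρ ≤ π ∧ π ≤ σ, moebius π σ = if ρ = σ then 1 else 0 := by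
  -- `sum_moebius_Icc` says `M * Z = 1` for the matrices of `μ` and `ζ`; then also `Z * M = 1`.
  let M : Matrix (Finpartition s) (Finpartition s) ℂ := fun x y => if x ≤ y then moebius x y else 0
  let Z : Matrix (Finpartition s) (Finpartition s) ℂ := fun x y => if x ≤ y then 1 else 0
  have hMZ : M * Z = 1 := by
    ext τ σ
    rw [Matrix.mul_apply, Matrix.one_apply, ← sum_moebius_Icc, sum_filter]
    simp only [M, Z, ite_and, ite_mul, zero_mul]
    simp only [mul_ite, mul_one, mul_zero]
  have hZM : (Z * M) ρ σ = (1 : Matrix _ _ ℂ) ρ σ := by rw [mul_eq_one_comm.1 hMZ]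
  rw [Matrix.mul_apply, Matrix.one_apply] at hZM
  rw [← hZM, sum_filter]
  simp only [M, Z, ite_and, ite_mul, one_mul, zero_mul]

open scoped Classical in
theorem sum_moebiusTop_of_le (hs : s.Nonempty) (ρ : Finpartition s) :
    ∑ π : Finpartition s with ρ ≤ π, moebiusTop #π.parts = if ρ = ⊤ then 1 else 0 := by
  have htop : (⊤ : Finpartition s).parts = {s} :=
    (parts_nonempty _ hs.ne_empty).subset_singleton_iff.1 (parts_top_subset s)
  have hμ (π : Finpartition s) : moebius π ⊤ = moebiusTop #π.parts := by
    rw [moebius, htop, prod_singleton, filter_true_of_mem fun V hV => π.le hV]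
  rw [← sum_moebius_Icc_right]
  simp only [le_top, and_true, hμ]

open scoped Classical in
theorem prod_cumulant (f : ℕ → ℂ) (π : Finpartition s) :
    ∏ W ∈ π.parts, cumulant f W =
      ∑ τ : Finpartition s with τ ≤ π, (∏ V ∈ τ.parts, f #V) * moebius τ π := by
  refine (sum_filter_le_prod π fun R => (∏ V ∈ R, f #V) * moebiusTop #R).symm.trans
    (sum_congr rfl fun τ hτ => ?_)
  rw [prod_mul_distrib, prod_parts_eq_prod_filter_subset (mem_filter.1 hτ).2, moebius]

open scoped Classical in
theorem sum_prod_cumulant (f : ℕ → ℂ) (σ : Finpartition s) :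
    ∑ π : Finpartition s with π ≤ σ, ∏ W ∈ π.parts, cumulant f W = ∏ V ∈ σ.parts, f #V := by
  simp_rw [prod_cumulant]
  rw [sum_comm' (t' := {τ | τ ≤ σ}) (s' := fun τ => {π | τ ≤ π ∧ π ≤ σ}) fun π τ => by
    simp only [mem_filter, mem_univ, true_and]
    exact ⟨fun ⟨hπ, hτ⟩ => ⟨⟨hτ, hπ⟩, hτ.trans hπ⟩, fun ⟨⟨hτ, hπ⟩, _⟩ => ⟨hπ, hτ⟩⟩]
  simp_rw [← mul_sum, sum_moebius_Icc, mul_ite, mul_one, mul_zero]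
  rw [sum_ite_eq', if_pos (by simp)]

theorem prod_pow_card_sub_one (σ : Finpartition s) (x : ℂ) :
    ∏ V ∈ σ.parts, x ^ (#V - 1) = x ^ (#s - #σ.parts) := by
  rw [prod_pow_eq_pow_sum, sum_tsub_distrib _ fun V hV => card_pos.2 (σ.nonempty_of_mem_parts hV),
    σ.sum_card_parts, sum_const, smul_eq_mul, mul_one]

section Embedding

variable {β γ : Type*} [DecidableEq β] [DecidableEq γ] {u : Finset β}

def mapEmbedding (ψ : β ↪ γ) (π : Finpartition u) : Finpartition (u.map ψ) :=
  ofExistsUnique (π.parts.map (Finset.mapEmbedding ψ).toEmbedding)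
    (fun _ hp => by
      obtain ⟨V, hV, rfl⟩ := mem_map.1 hp
      exact map_subset_map.2 (π.le hV))
    (fun _ hb => by
      obtain ⟨a, ha, rfl⟩ := mem_map.1 hb
      obtain ⟨V, ⟨hV, haV⟩, huniq⟩ := π.existsUnique_mem ha
      refine ⟨V.map ψ, ⟨mem_map_of_mem _ hV, mem_map_of_mem _ haV⟩, ?_⟩
      rintro _ ⟨hp, hap⟩
      obtain ⟨U, hU, rfl⟩ := mem_map.1 hp
      rw [huniq U ⟨hU, (mem_map' ψ).1 hap⟩]
      rfl)
    (fun h => by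
      obtain ⟨V, hV, hV₀⟩ := mem_map.1 h
      exact π.empty_notMem_parts (map_eq_empty.1 hV₀ ▸ hV))

def comapEmbedding (ψ : β ↪ γ) (π : Finpartition (u.map ψ)) : Finpartition u :=
  ofExistsUnique (π.parts.image fun V => {x ∈ u | ψ x ∈ V}) (fun _ hp => by
      obtain ⟨V, _, rfl⟩ := mem_image.1 hp
      exact filter_subset _ _)
    (fun a ha => by
      obtain ⟨V, ⟨hV, haV⟩, huniq⟩ := π.existsUnique_mem (mem_map_of_mem ψ ha)
      refine ⟨_, ⟨mem_image_of_mem _ hV, mem_filter.2 ⟨ha, haV⟩⟩, ?_⟩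
      rintro _ ⟨hp, hap⟩
      obtain ⟨U, hU, rfl⟩ := mem_image.1 hp
      rw [huniq U ⟨hU, (mem_filter.1 hap).2⟩])
    (fun h => by
      obtain ⟨V, hV, hV₀⟩ := mem_image.1 h
      obtain ⟨y, hy⟩ := π.nonempty_of_mem_parts hV
      obtain ⟨x, hx, rfl⟩ := mem_map.1 (π.le hV hy)
      exact notMem_empty x (hV₀ ▸ mem_filter.2 ⟨hx, hy⟩))

theorem mapEmbedding_comapEmbedding (ψ : β ↪ γ) (π : Finpartition (u.map ψ)) :
    mapEmbedding ψ (comapEmbedding ψ π) = π := by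
  have hmap : ∀ V ∈ π.parts, {x ∈ u | ψ x ∈ V}.map ψ = V := by
    intro V hV
    ext y
    refine ⟨fun hy => ?_, fun hy => ?_⟩
    · obtain ⟨x, hx, rfl⟩ := mem_map.1 hy
      exact (mem_filter.1 hx).2
    · obtain ⟨x, hx, rfl⟩ := mem_map.1 (π.le hV hy)
      exact mem_map_of_mem ψ (mem_filter.2 ⟨hx, hy⟩)
  ext1
  simp only [mapEmbedding, comapEmbedding, ofExistsUnique_parts, map_eq_image, image_image]
  exact (image_congr hmap).trans image_id

theorem mapEmbedding_bijective (ψ : β ↪ γ) :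
    Function.Bijective (mapEmbedding ψ : Finpartition u → Finpartition (u.map ψ)) := by
  refine ⟨fun π₁ π₂ h => ?_, fun π => ⟨_, mapEmbedding_comapEmbedding ψ π⟩⟩
  ext1
  exact map_injective _ (congrArg parts h)

end Embedding

section Setoid

variable [Fintype α]

theorem toSetoidUniv_le_toSetoidUniv {σ π : Finpartition (univ : Finset α)} :
    σ.toSetoidUniv ≤ π.toSetoidUniv ↔ σ ≤ π := by
  constructor
  · intro h V hV
    obtain ⟨a, ha⟩ := σ.nonempty_of_mem_parts hV
    obtain ⟨W, hW, haW⟩ := π.exists_mem (mem_univ a)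
    refine ⟨W, hW, fun b hb => ?_⟩
    obtain ⟨W', hW', haW', hbW'⟩ := h ⟨V, hV, ha, hb⟩
    rwa [π.eq_of_mem_parts hW' hW haW' haW] at hbW'
  · rintro h a b ⟨V, hV, haV, hbV⟩
    obtain ⟨W, hW, hVW⟩ := h hV
    exact ⟨W, hW, hVW haV, hVW hbV⟩

theorem toSetoidUniv_ofSetoid (S : Setoid α) [DecidableRel S.r] :
    (ofSetoid S).toSetoidUniv = S := by
  ext a b
  refine ⟨fun ⟨V, hV, haV, hbV⟩ => ?_, fun hab => ⟨_, (ofSetoid S).part_mem.2 (mem_univ a),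
    (ofSetoid S).mem_part (mem_univ a), mem_part_ofSetoid_iff_rel.2 hab⟩⟩
  rw [← (ofSetoid S).part_eq_of_mem hV haV] at hbV
  exact mem_part_ofSetoid_iff_rel.1 hbV

open scoped Classical in
noncomputable def orderIsoSetoid : Finpartition (univ : Finset α) ≃o Setoid α where
  toFun := toSetoidUniv
  invFun S := ofSetoid S
  left_inv _ := le_antisymm (toSetoidUniv_le_toSetoidUniv.1 (toSetoidUniv_ofSetoid _).le)
    (toSetoidUniv_le_toSetoidUniv.1 (toSetoidUniv_ofSetoid _).ge)
  right_inv S := toSetoidUniv_ofSetoid S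
  map_rel_iff' := toSetoidUniv_le_toSetoidUniv

open scoped Classical in
theorem sum_moebiusTop_of_forall_le [Nonempty α] {ι : Type*}
    (σ : ι → Finpartition (univ : Finset α)) [DecidablePred fun π => ∀ i, σ i ≤ π] :
    ∑ π : Finpartition univ with ∀ i, σ i ≤ π, moebiusTop #π.parts =
      if (⨆ i, (σ i).toSetoidUniv) = ⊤ then 1 else 0 := by
  have hle (π : Finpartition (univ : Finset α)) :
      (∀ i, σ i ≤ π) ↔ orderIsoSetoid.symm (⨆ i, (σ i).toSetoidUniv) ≤ π := by
    rw [OrderIso.symm_apply_le, iSup_le_iff]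
    exact forall_congr' fun i => toSetoidUniv_le_toSetoidUniv.symm
  simp_rw [hle, sum_moebiusTop_of_le univ_nonempty, map_eq_top_iff]

end Setoid

end Finpartition

theorem cumulant_map (f : ℕ → ℂ) {β γ : Type*} [DecidableEq β] [DecidableEq γ] (ψ : β ↪ γ)
    (t : Finset β) : cumulant f (t.map ψ) = cumulant f t := by
  refine (Fintype.sum_bijective _ (Finpartition.mapEmbedding_bijective ψ) _ _ fun π => ?_).symm
  simp [Finpartition.mapEmbedding, prod_map]

theorem cumulant_univ_fin (f : ℕ → ℂ) {β : Type*} [DecidableEq β] (t : Finset β) :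
    cumulant f (univ : Finset (Fin #t)) = cumulant f t := by
  let ψ : Fin #t ↪ β := t.equivFin.symm.toEmbedding.trans (Function.Embedding.subtype _)
  have ht : (univ : Finset (Fin #t)).map ψ = t := by
    rw [← Finset.map_map, univ_map_equiv_to_embedding, univ_eq_attach, attach_map_val]
  rw [← cumulant_map f ψ, ht]

theorem ffcumulant_eq_cumulant (d n : ℕ) (q : ℂ[X]) :
    ffcumulant d n q =
      (-(d : ℂ)) ^ (n - 1) / (n - 1)! * cumulant (atilde d q) (univ : Finset (Fin n)) :=
  rfl

theorem cumulant_atilde {d : ℕ} (hd : d ≠ 0) (q : ℂ[X]) {β : Type*} [DecidableEq β]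
    (t : Finset β) :
    cumulant (atilde d q) t = moebiusTop #t / (d : ℂ) ^ (#t - 1) * ffcumulant d #t q := by
  have hd' : (d : ℂ) ≠ 0 := Nat.cast_ne_zero.2 hd
  have hsign : (-1 : ℂ) ^ (#t - 1) * (-(d : ℂ)) ^ (#t - 1) = (d : ℂ) ^ (#t - 1) := by
    rw [← mul_pow, neg_one_mul, neg_neg]
  have hfact : ((#t - 1)! : ℂ) ≠ 0 := Nat.cast_ne_zero.2 (Nat.factorial_ne_zero _)
  rw [ffcumulant_eq_cumulant, cumulant_univ_fin, moebiusTop]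
  field_simp
  rw [mul_assoc, hsign]

theorem prod_cumulant_atilde {d n : ℕ} (hd : d ≠ 0) (q : ℂ[X])
    (σ : Finpartition (univ : Finset (Fin n))) :
    ∏ W ∈ σ.parts, cumulant (atilde d q) W =
      (d : ℂ) ^ ((#σ.parts : ℤ) - n) * σ.moebiusBot * ∏ V ∈ σ.parts, ffcumulant d #V q := by
  have hexp : (#σ.parts : ℤ) - n = -((n - #σ.parts : ℕ) : ℤ) := by
    have := σ.card_parts_le_card
    rw [card_univ, Fintype.card_fin] at this
    omega
  rw [prod_congr rfl fun W _ => cumulant_atilde hd q W, prod_mul_distrib, prod_div_distrib,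
    Finpartition.prod_pow_card_sub_one, card_univ, Fintype.card_fin, hexp, zpow_neg, zpow_natCast,
    Finpartition.moebiusBot]
  ring

open scoped Classical in
theorem prod_atilde_ffconv {d n m : ℕ} (hnd : n ≤ d) (p : Fin m → ℂ[X])
    (π : Finpartition (univ : Finset (Fin n))) :
    ∏ V ∈ π.parts, atilde d (ffconv d m p) #V =
      ∑ σ : Fin m → Finpartition (univ : Finset (Fin n)) with ∀ i, σ i ≤ π,
        ∏ i, ∏ W ∈ (σ i).parts, cumulant (atilde d (p i)) W := by
  calc ∏ V ∈ π.parts, atilde d (ffconv d m p) #V = ∏ i, ∏ V ∈ π.parts, atilde d (p i) #V := by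
        rw [Finset.prod_comm]
        refine prod_congr rfl fun V _ => atilde_ffconv ?_ p
        exact (card_le_univ V).trans (by rw [Fintype.card_fin]; exact hnd)
    _ = ∏ i, ∑ τ : Finpartition univ with τ ≤ π, ∏ W ∈ τ.parts, cumulant (atilde d (p i)) W := by
        simp_rw [Finpartition.sum_prod_cumulant]
    _ = _ := by
        rw [prod_univ_sum]
        congr 1
        ext σ
        simp [Fintype.mem_piFinset]

open scoped Classical in
theorem statement8_general (d : ℕ) (m : ℕ) (p : Fin m → Polynomial ℂ)
    (n : ℕ) (hn : 1 ≤ n) (hnd : n ≤ d) :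
    ffcumulant d n (ffconv d m p) =
      (-(d : ℂ)) ^ (n - 1) / (Nat.factorial (n - 1) : ℂ) *
        ∑ σ : Fin m → Finpartition (Finset.univ : Finset (Fin n)),
          if (⨆ i, (σ i).toSetoidUniv) = (⊤ : Setoid (Fin n)) then
            ∏ i, ((d : ℂ) ^ (((σ i).parts.card : ℤ) - (n : ℤ)) *
              (∏ V ∈ (σ i).parts,
                ((-1) ^ (V.card - 1) * (Nat.factorial (V.card - 1) : ℂ))) *
              ∏ V ∈ (σ i).parts, ffcumulant d V.card (p i))
          else 0 := by
  have : Nonempty (Fin n) := ⟨⟨0, hn⟩⟩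
  rw [ffcumulant_eq_cumulant, cumulant]
  congr 1
  simp_rw [prod_atilde_ffconv hnd, sum_mul]
  rw [sum_comm' (t' := univ) (s' := fun σ => {π | ∀ i, σ i ≤ π}) fun π σ => by simp]
  simp_rw [← mul_sum, Finpartition.sum_moebiusTop_of_forall_le, mul_ite, mul_one,
    mul_zero, prod_cumulant_atilde (by omega : d ≠ 0)]
  rfl

open scoped Classical in
theorem statement8 (d : ℕ) (hd : 1 ≤ d) (m : ℕ) (hm : 1 ≤ m) (p : Fin m → Polynomial ℂ)
    (hmonic : ∀ i, (p i).Monic) (hdeg : ∀ i, (p i).natDegree = d)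
    (n : ℕ) (hn : 1 ≤ n) (hnd : n ≤ d) :
    ffcumulant d n (ffconv d m p) =
      (-(d : ℂ)) ^ (n - 1) / (Nat.factorial (n - 1) : ℂ) *
        ∑ σ : Fin m → Finpartition (Finset.univ : Finset (Fin n)),
          if (⨆ i, (σ i).toSetoidUniv) = (⊤ : Setoid (Fin n)) then
            ∏ i, ((d : ℂ) ^ (((σ i).parts.card : ℤ) - (n : ℤ)) *
              (∏ V ∈ (σ i).parts,
                ((-1) ^ (V.card - 1) * (Nat.factorial (V.card - 1) : ℂ))) *
              ∏ V ∈ (σ i).parts, ffcumulant d V.card (p i))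
          else 0 :=
  statement8_general d m p n hn hnd
end

section
/- Let f = 1 + Σ_{k≥1} (a_k/k!)·X^k be a formal power series over ℂ with constant term 1, where a_k ∈ ℂ. Then for every l ≥ 0 there exists a polynomial q_l ∈ ℂ[y] with deg q_l ≤ l and with coefficient of y^l equal to a_1^l/l!, such that for every natural number m, the coefficient of X^l in the power series f^m equals q_l(m). -/
/-!
Write `f = 1 + g` with `g(0) = 0`. Then `f ^ m = ∑ₖ (m choose k) gᵏ`, and since `X ^ k ∣ g ^ k` only
`k ≤ l` contribute to the coefficient of `X ^ l`. Hence that coefficient is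
`∑_{k ≤ l} [Xˡ](gᵏ) · (m choose k)`, a polynomial of degree `≤ l` in `m` whose top coefficient is
`[Xˡ](gˡ) / l! = (g'(0))ˡ / l! = a₁ˡ / l!`.
-/

open Finset

namespace PowerSeries

variable {R : Type*} [CommSemiring R] {g : PowerSeries R}

theorem coeff_pow_eq_zero_of_lt (hg : constantCoeff g = 0) {l j : ℕ} (hlj : l < j) :
    coeff l (g ^ j) = 0 :=
  coeff_of_lt_order l ((Nat.cast_lt.2 hlj).trans_le (le_order_pow_of_constantCoeff_eq_zero j hg))

theorem coeff_self_pow (hg : constantCoeff g = 0) (l : ℕ) :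
    coeff l (g ^ l) = coeff 1 g ^ l := by
  obtain ⟨h, rfl⟩ := X_dvd_iff.mpr hg
  have hcoeff_pow : coeff l ((X * h) ^ l) = constantCoeff h ^ l := by
    rw [mul_pow, ← map_pow, ← coeff_zero_eq_constantCoeff_apply]
    simpa using coeff_X_pow_mul (h ^ l) l 0
  rw [hcoeff_pow, ← coeff_zero_eq_constantCoeff_apply]
  simp

theorem coeff_one_add_pow (hg : constantCoeff g = 0) (l m : ℕ) :
    coeff l ((1 + g) ^ m) = ∑ j ∈ range (l + 1), (m.choose j : R) * coeff l (g ^ j) := by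
  have hbinom :
      coeff l ((1 + g) ^ m) = ∑ j ∈ range (m + 1), (m.choose j : R) * coeff l (g ^ j) := by
    rw [add_comm, add_pow, map_sum]
    refine sum_congr rfl fun j _ => ?_
    rw [one_pow, mul_one, ← map_natCast (C (R := R)), coeff_mul_C, mul_comm]
  calc coeff l ((1 + g) ^ m)
      = ∑ j ∈ range (m + l + 1), (m.choose j : R) * coeff l (g ^ j) := by
        rw [hbinom]
        refine sum_subset (range_subset_range.mpr (by omega)) fun j _ hj => ?_
        rw [Nat.choose_eq_zero_of_lt (by simp at hj; omega), Nat.cast_zero, zero_mul]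
    _ = ∑ j ∈ range (l + 1), (m.choose j : R) * coeff l (g ^ j) := by
        refine (sum_subset (range_subset_range.mpr (by omega)) fun j _ hj => ?_).symm
        rw [coeff_pow_eq_zero_of_lt hg (by simp at hj; omega), mul_zero]

end PowerSeries

namespace Polynomial

variable (K : Type*) [Field K]

noncomputable def binomialPoly (j : ℕ) : K[X] :=
  (j.factorial : K)⁻¹ • descPochhammer K j

variable {K}

theorem natDegree_binomialPoly_le (j : ℕ) : (binomialPoly K j).natDegree ≤ j :=
  (natDegree_smul_le _ _).trans (descPochhammer_natDegree K j).le

theorem coeff_binomialPoly_self (j : ℕ) : (binomialPoly K j).coeff j = (j.factorial : K)⁻¹ := by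
  have hlead : (descPochhammer K j).coeff j = 1 := by
    simpa [leadingCoeff, descPochhammer_natDegree] using (monic_descPochhammer K j).leadingCoeff
  rw [binomialPoly, coeff_smul, hlead, smul_eq_mul, mul_one]

theorem eval_binomialPoly [CharZero K] (j n : ℕ) :
    (binomialPoly K j).eval (n : K) = n.choose j := by
  have hj : (j.factorial : K) ≠ 0 := Nat.cast_ne_zero.mpr j.factorial_ne_zero
  rw [binomialPoly, eval_smul, descPochhammer_eval_eq_descFactorial,
    Nat.descFactorial_eq_factorial_mul_choose, smul_eq_mul, Nat.cast_mul, inv_mul_cancel_left₀ hj]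

variable (c : ℕ → K) (l : ℕ)

theorem natDegree_sum_smul_binomialPoly_le :
    (∑ j ∈ range (l + 1), c j • binomialPoly K j).natDegree ≤ l :=
  natDegree_sum_le_of_forall_le _ _ fun j hj =>
    (natDegree_smul_le _ _).trans ((natDegree_binomialPoly_le j).trans (by simp at hj; omega))

theorem coeff_sum_smul_binomialPoly_self :
    (∑ j ∈ range (l + 1), c j • binomialPoly K j).coeff l = c l / (l.factorial : K) := by
  rw [finsetSum_coeff, sum_eq_single_of_mem l (self_mem_range_succ l) fun j hj hjl => ?_]
  · rw [coeff_smul, coeff_binomialPoly_self, smul_eq_mul, div_eq_mul_inv]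
  · have hjl' : j < l := lt_of_le_of_ne (by simpa [Nat.lt_succ_iff] using hj) hjl
    rw [coeff_smul, coeff_eq_zero_of_natDegree_lt ((natDegree_binomialPoly_le j).trans_lt hjl'),
      smul_zero]

theorem eval_sum_smul_binomialPoly [CharZero K] (n : ℕ) :
    (∑ j ∈ range (l + 1), c j • binomialPoly K j).eval (n : K) =
      ∑ j ∈ range (l + 1), (n.choose j : K) * c j := by
  simp only [eval_finsetSum, eval_smul, eval_binomialPoly, smul_eq_mul, mul_comm]

end Polynomial

theorem statement13 (a : ℕ → ℂ) (f : PowerSeries ℂ)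
    (h0 : PowerSeries.coeff 0 f = 1)
    (hf : ∀ k, 1 ≤ k → PowerSeries.coeff k f = a k / (Nat.factorial k : ℂ)) :
    ∀ l : ℕ, ∃ q : Polynomial ℂ, q.natDegree ≤ l ∧
      q.coeff l = a 1 ^ l / (Nat.factorial l : ℂ) ∧
      ∀ m : ℕ, PowerSeries.coeff l (f ^ m) = q.eval (m : ℂ) := by
  intro l
  set g : PowerSeries ℂ := f - 1
  have hfg : f = 1 + g := by ring
  have hg0 : PowerSeries.constantCoeff g = 0 := by
    simp [g, ← PowerSeries.coeff_zero_eq_constantCoeff, h0]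
  have hg1 : PowerSeries.coeff 1 g = a 1 := by simp [g, hf 1 le_rfl]
  refine ⟨∑ j ∈ range (l + 1), PowerSeries.coeff l (g ^ j) • Polynomial.binomialPoly ℂ j,
    Polynomial.natDegree_sum_smul_binomialPoly_le _ l, ?_, fun m => ?_⟩
  · rw [Polynomial.coeff_sum_smul_binomialPoly_self, PowerSeries.coeff_self_pow hg0, hg1]
  · rw [Polynomial.eval_sum_smul_binomialPoly, hfg, PowerSeries.coeff_one_add_pow hg0]
end

section
/- Let d ≥ 2 and let θ_1, …, θ_d be real numbers with Σ_{k=1}^d θ_k = 0 and (1/d)·Σ_{k=1}^d θ_k² = σ². For each positive integer m set p_m(x) := ∏_{k=1}^d (x − e^{θ_k/√m}). Then for every k ∈ {0,1,…,d}, lim_{m→∞} ã_k(p_m)^m = exp(k(d−k)σ²/(2(d−1))); equivalently, the polynomials p_m^{⊠_d m} converge coefficientwise to I_d(x; dσ²/(d−1)) as m → ∞, where I_d(x;t) := Σ_{k=0}^d (−1)^k · C(d,k) · exp(k(d−k)t/(2d)) · x^{d−k} for t ≥ 0. -/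
open Finset Filter

/-- The limit polynomial `I_d(x;t)` of the finite free multiplicative CLT. -/
noncomputable def Idpoly (d : ℕ) (t : ℝ) : Polynomial ℂ :=
  ∑ k ∈ Finset.range (d + 1),
    Polynomial.C ((-1) ^ k * (d.choose k : ℂ) *
        ((Real.exp ((k : ℝ) * ((d : ℝ) - (k : ℝ)) * t / (2 * (d : ℝ)))) : ℂ)) *
      Polynomial.X ^ (d - k)

/-!
By Vieta, `atilde d p_m k` is the average over the `k`-subsets `S` of `exp (θ_S / √m)`, where
`θ_S = ∑ i ∈ S, θ i`. Since `∑ θ = 0`, the `θ_S` also average to zero, so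
`atilde d p_m k = 1 + avg (θ_S ^ 2) / (2 m) + o(1 / m)` and its `m`-th power tends to
`exp (avg (θ_S ^ 2) / 2)`. Double counting gives `∑_S θ_S ^ 2 = C(d-2, k-1) ∑ θ_i ^ 2`, which is
the exponent `k (d - k) σ² / (2 (d - 1))`. The coefficients of `p^{⊠_d m}` are `(-1)^k C(d,k)`
times `atilde d p k ^ m`, whence the second statement.
-/

open Polynomial Topology

theorem Nat.mul_sub_one_mul_choose_sub_two (n k : ℕ) :
    n * (n - 1) * (n - 2).choose k = (k + 1) * (n - (k + 1)) * n.choose (k + 1) := by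
  rcases n with _ | _ | e
  · simp
  · simp
  · have h1 := Nat.add_one_mul_choose_eq (e + 1) k
    have h2 := Nat.choose_mul_succ_eq e k
    simp only [Nat.add_sub_cancel, show e + 1 + 1 - (k + 1) = e + 1 - k by omega]
    calc (e + 1 + 1) * (e + 1) * e.choose k = (e + 1 + 1) * (e.choose k * (e + 1)) := by ring
      _ = (e + 1 + 1) * (e + 1).choose k * (e + 1 - k) := by rw [h2]; ring
      _ = (k + 1) * (e + 1 - k) * (e + 1 + 1).choose (k + 1) := by rw [h1]; ring

section PowersetCard

variable {ι : Type*} [DecidableEq ι]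

theorem sum_powersetCard_sum_comm {M : Type*} [AddCommMonoid M] (u : Finset ι) (k : ℕ)
    (g : Finset ι → ι → M) :
    ∑ S ∈ u.powersetCard k, ∑ i ∈ S, g S i = ∑ i ∈ u, ∑ S ∈ u.powersetCard k with i ∈ S, g S i :=
  sum_comm' fun S i => by
    simp only [mem_powersetCard, mem_filter]
    exact ⟨fun ⟨⟨hSu, hS⟩, hi⟩ => ⟨⟨⟨hSu, hS⟩, hi⟩, hSu hi⟩, fun ⟨⟨h, hi⟩, _⟩ => ⟨h, hi⟩⟩

theorem sum_powersetCard_succ_sum {R : Type*} [CommSemiring R] (u : Finset ι) (k : ℕ)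
    (f : ι → R) :
    ∑ S ∈ u.powersetCard (k + 1), ∑ i ∈ S, f i = (#u - 1).choose k * ∑ i ∈ u, f i := by
  rw [sum_powersetCard_sum_comm, mul_sum]
  refine sum_congr rfl fun i hi => ?_
  have hcount : #{S ∈ u.powersetCard (k + 1) | i ∈ S} = (#u - 1).choose k := by
    simpa [singleton_subset_iff] using
      card_filter_powersetCard_subset {i} u (k + 1) (singleton_subset_iff.2 hi) (by simp)
  rw [sum_const, hcount, nsmul_eq_mul]

theorem sum_powersetCard_sum_eq_zero {R : Type*} [CommSemiring R] {u : Finset ι} {f : ι → R}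
    (hf : ∑ i ∈ u, f i = 0) (k : ℕ) :
    ∑ S ∈ u.powersetCard k, ∑ i ∈ S, f i = 0 := by
  cases k with
  | zero => simp
  | succ k => rw [sum_powersetCard_succ_sum, hf, mul_zero]

theorem sum_powersetCard_succ_sum_sq {R : Type*} [CommRing R] {u : Finset ι} {f : ι → R}
    (hf : ∑ i ∈ u, f i = 0) (k : ℕ) :
    ∑ S ∈ u.powersetCard (k + 1), (∑ i ∈ S, f i) ^ 2 = (#u - 2).choose k * ∑ i ∈ u, f i ^ 2 := by
  -- Removing `i` from the `k+1`-subsets containing it, the mean-zero condition gives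
  -- `∑_{S ∋ i} ∑_{j ∈ S} f j = -∑_{S ⊆ u \ {i}} ∑_{j ∈ S} f j = C(#u-2, k) f i`.
  have hfiber : ∀ i ∈ u,
      ∑ S ∈ u.powersetCard (k + 1) with i ∈ S, ∑ j ∈ S, f j = (#u - 2).choose k * f i := by
    intro i hi
    have herase : ∑ j ∈ u.erase i, f j = -f i := by
      rw [← sum_erase_add u f hi] at hf
      exact eq_neg_of_add_eq_zero_left hf
    have hcompl : {S ∈ u.powersetCard (k + 1) | i ∉ S} = (u.erase i).powersetCard (k + 1) := by
      ext S
      simp [subset_erase, and_right_comm]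
    have hsplit := sum_filter_add_sum_filter_not (u.powersetCard (k + 1)) (i ∈ ·)
      (fun S => ∑ j ∈ S, f j)
    rw [hcompl, sum_powersetCard_succ_sum, sum_powersetCard_succ_sum, hf, herase,
      card_erase_of_mem hi, Nat.sub_sub] at hsplit
    linear_combination hsplit
  calc ∑ S ∈ u.powersetCard (k + 1), (∑ i ∈ S, f i) ^ 2
      = ∑ S ∈ u.powersetCard (k + 1), ∑ i ∈ S, f i * ∑ j ∈ S, f j := by
        simp only [sq, sum_mul]
    _ = ∑ i ∈ u, f i * ∑ S ∈ u.powersetCard (k + 1) with i ∈ S, ∑ j ∈ S, f j := by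
        simp only [sum_powersetCard_sum_comm, mul_sum]
    _ = (#u - 2).choose k * ∑ i ∈ u, f i ^ 2 := by
        rw [mul_sum]
        exact sum_congr rfl fun i hi => by rw [hfiber i hi]; ring

theorem mul_sum_powersetCard_sum_sq {R : Type*} [CommRing R] {u : Finset ι} {f : ι → R}
    (hf : ∑ i ∈ u, f i = 0) (k : ℕ) :
    ((#u * (#u - 1) : ℕ) : R) * ∑ S ∈ u.powersetCard k, (∑ i ∈ S, f i) ^ 2
      = ((k * (#u - k) * (#u).choose k : ℕ) : R) * ∑ i ∈ u, f i ^ 2 := by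
  cases k with
  | zero => simp
  | succ k =>
    rw [sum_powersetCard_succ_sum_sq hf, ← mul_assoc, ← Nat.cast_mul,
      Nat.mul_sub_one_mul_choose_sub_two]

end PowersetCard

theorem tendsto_nat_mul_exp_div_sqrt_sub_one_sub (s : ℝ) :
    Tendsto (fun m : ℕ => m * (Real.exp (s / √m) - 1 - s / √m)) atTop (𝓝 (s ^ 2 / 2)) := by
  have hx : Tendsto (fun m : ℕ => s / √m) atTop (𝓝 0) :=
    tendsto_const_nhds.div_atTop (Real.tendsto_sqrt_atTop.comp tendsto_natCast_atTop_atTop)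
  have hsq : ∀ m : ℕ, (s / √m) ^ 2 = s ^ 2 * (1 / m) := fun m => by
    rw [div_pow, Real.sq_sqrt m.cast_nonneg, mul_one_div]
  -- Second-order Taylor: the remainder is `o(x²) = o(1/m)`.
  have hrem : (fun m : ℕ => Real.exp (s / √m) - ∑ i ∈ range 3, (s / √m) ^ i / i.factorial)
      =o[atTop] fun m : ℕ => 1 / (m : ℝ) := by
    refine ((Real.exp_sub_sum_range_succ_isLittleO_pow 2).comp_tendsto hx).trans_isBigO ?_
    simp only [Function.comp_def, hsq]
    exact Asymptotics.isBigO_const_mul_self _ _ _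
  have hlim := hrem.tendsto_div_nhds_zero.add_const (s ^ 2 / 2)
  rw [zero_add] at hlim
  refine hlim.congr' ?_
  filter_upwards [eventually_ne_atTop 0] with m hm
  have hm' : (m : ℝ) ≠ 0 := Nat.cast_ne_zero.2 hm
  simp only [sum_range_succ, sum_range_zero, hsq]
  field_simp
  ring

theorem tendsto_average_exp_div_sqrt_pow {ι : Type*} {A : Finset ι} (hA : A.Nonempty)
    (s : ι → ℝ) (hs : ∑ a ∈ A, s a = 0) :
    Tendsto (fun m : ℕ => ((#A : ℝ)⁻¹ * ∑ a ∈ A, Real.exp (s a / √m)) ^ m) atTop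
      (𝓝 (Real.exp ((#A : ℝ)⁻¹ * ∑ a ∈ A, s a ^ 2 / 2))) := by
  have hA0 : (#A : ℝ) ≠ 0 := Nat.cast_ne_zero.2 hA.card_ne_zero
  -- Since `∑ s a = 0`, subtracting the linear terms does not change the average.
  have hcentred : ∀ m : ℕ, (#A : ℝ)⁻¹ * ∑ a ∈ A, m * (Real.exp (s a / √m) - 1 - s a / √m)
      = m * ((#A : ℝ)⁻¹ * ∑ a ∈ A, Real.exp (s a / √m) - 1) := fun m => by
    rw [← mul_sum, sum_sub_distrib, sum_sub_distrib, ← sum_div, hs, sum_const, nsmul_one]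
    field_simp
    ring
  refine (Real.tendsto_one_add_pow_exp_of_tendsto ?_).congr fun m => by rw [add_sub_cancel]
  exact ((tendsto_finsetSum A fun a _ =>
    tendsto_nat_mul_exp_div_sqrt_sub_one_sub (s a)).const_mul _).congr hcentred

noncomputable def ofAtilde (d : ℕ) (a : ℕ → ℂ) : ℂ[X] :=
  ∑ i ∈ range (d + 1), C ((-1) ^ i * (d.choose i : ℂ) * a i) * X ^ (d - i)

theorem coeff_ofAtilde (d : ℕ) (a : ℕ → ℂ) (j : ℕ) :
    (ofAtilde d a).coeff j =
      ∑ i ∈ range (d + 1), if j = d - i then (-1) ^ i * (d.choose i : ℂ) * a i else 0 := by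
  simp only [ofAtilde, finsetSum_coeff, coeff_C_mul_X_pow]

theorem coeff_ofAtilde_sub {d i : ℕ} (a : ℕ → ℂ) (hi : i ≤ d) :
    (ofAtilde d a).coeff (d - i) = (-1) ^ i * (d.choose i : ℂ) * a i := by
  rw [coeff_ofAtilde, sum_eq_single_of_mem i (mem_range.2 (Nat.lt_succ_of_le hi))]
  · rw [if_pos rfl]
  · intro i' hi' hne
    rw [if_neg (by rw [mem_range] at hi'; omega)]

theorem atilde_ofAtilde {d i : ℕ} (a : ℕ → ℂ) (hi : i ≤ d) : atilde d (ofAtilde d a) i = a i := by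
  have hchoose : (d.choose i : ℂ) ≠ 0 := Nat.cast_ne_zero.2 (Nat.choose_pos hi).ne'
  rw [atilde, coeff_ofAtilde_sub a hi]
  field_simp
  rw [← pow_mul, pow_mul', neg_one_sq, one_pow, one_mul]

theorem ofAtilde_congr {d : ℕ} {a b : ℕ → ℂ} (h : ∀ i ≤ d, a i = b i) :
    ofAtilde d a = ofAtilde d b :=
  sum_congr rfl fun i hi => by rw [h i (Nat.le_of_lt_succ (mem_range.1 hi))]

theorem X_sub_one_pow_eq_ofAtilde (d : ℕ) : (X - 1 : ℂ[X]) ^ d = ofAtilde d fun _ => 1 := by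
  rw [sub_eq_add_neg, add_pow, ofAtilde, ← sum_range_reflect]
  refine sum_congr rfl fun i hi => ?_
  have hid : i ≤ d := Nat.le_of_lt_succ (mem_range.1 hi)
  rw [Nat.add_sub_cancel, Nat.sub_sub_self hid, Nat.choose_symm hid]
  simp only [map_mul, map_pow, map_neg, map_one, map_natCast, mul_one]
  ring

theorem ffmul_eq_ofAtilde (d : ℕ) (p q : ℂ[X]) :
    ffmul d p q = ofAtilde d fun i => atilde d p i * atilde d q i := by
  simp only [ffmul, ofAtilde, mul_assoc]

theorem ffpow_eq_ofAtilde (d : ℕ) (p : ℂ[X]) (m : ℕ) :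
    ffpow d p m = ofAtilde d fun i => atilde d p i ^ m := by
  induction m with
  | zero => simp only [ffpow, pow_zero, X_sub_one_pow_eq_ofAtilde]
  | succ m ih =>
    rw [ffpow, ffmul_eq_ofAtilde, ih]
    exact ofAtilde_congr fun i hi => by rw [atilde_ofAtilde _ hi, pow_succ]

theorem Idpoly_eq_ofAtilde (d : ℕ) (t : ℝ) :
    Idpoly d t = ofAtilde d fun k => (Real.exp (k * (d - k) * t / (2 * d)) : ℂ) :=
  rfl

theorem tendsto_coeff_ofAtilde {α : Type*} {l : Filter α} {d : ℕ} {a : α → ℕ → ℂ}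
    {b : ℕ → ℂ} (h : ∀ i ≤ d, Tendsto (fun x => a x i) l (𝓝 (b i))) (j : ℕ) :
    Tendsto (fun x => (ofAtilde d (a x)).coeff j) l (𝓝 ((ofAtilde d b).coeff j)) := by
  simp only [coeff_ofAtilde]
  refine tendsto_finsetSum _ fun i hi => ?_
  split_ifs
  · exact (h i (Nat.le_of_lt_succ (mem_range.1 hi))).const_mul _
  · exact tendsto_const_nhds

theorem atilde_prod_X_sub_C {d k : ℕ} (x : Fin d → ℂ) (hk : k ≤ d) :
    atilde d (∏ i, (X - C (x i))) k =
      (d.choose k : ℂ)⁻¹ * ∑ S ∈ (univ : Finset (Fin d)).powersetCard k, ∏ i ∈ S, x i := by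
  have hcoeff := Finset.prod_X_add_C_coeff univ (fun i => -x i)
    (k := d - k) (by simp)
  simp only [map_neg, ← sub_eq_add_neg, card_univ, Fintype.card_fin,
    Nat.sub_sub_self hk] at hcoeff
  rw [atilde, hcoeff, mul_assoc, mul_sum, mul_sum, mul_sum]
  refine sum_congr rfl fun S hS => ?_
  have hsign : (-1 : ℂ) ^ k * (-1) ^ k = 1 := by rw [← mul_pow]; norm_num
  rw [prod_neg, (mem_powersetCard.1 hS).2]
  linear_combination ((d.choose k : ℂ)⁻¹ * ∏ i ∈ S, x i) * hsign

theorem tendsto_atilde_prod_X_sub_C_exp_pow {d k : ℕ} (hd : 2 ≤ d) {θ : Fin d → ℝ}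
    (hθ : ∑ i, θ i = 0) (hk : k ≤ d) :
    Tendsto (fun m : ℕ => atilde d (∏ i, (X - C ((Real.exp (θ i / √m) : ℝ) : ℂ))) k ^ m) atTop
      (𝓝 ((Real.exp (k * (d - k) * ((∑ i, θ i ^ 2) / d) / (2 * (d - 1))) : ℝ) : ℂ)) := by
  set A := (univ : Finset (Fin d)).powersetCard k
  have hA : #A = d.choose k := by simp [A]
  have hvieta : ∀ m : ℕ, atilde d (∏ i, (X - C ((Real.exp (θ i / √m) : ℝ) : ℂ))) k =
      (((#A : ℝ)⁻¹ * ∑ S ∈ A, Real.exp ((∑ i ∈ S, θ i) / √m) : ℝ) : ℂ) := fun m => by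
    simp only [atilde_prod_X_sub_C _ hk, hA, sum_div, Real.exp_sum]
    push_cast
    rfl
  have hmoment : (#A : ℝ)⁻¹ * ∑ S ∈ A, (∑ i ∈ S, θ i) ^ 2 / 2 =
      k * (d - k) * ((∑ i, θ i ^ 2) / d) / (2 * (d - 1)) := by
    have hd1 : (d : ℝ) - 1 ≠ 0 := by
      have : (2 : ℝ) ≤ d := by exact_mod_cast hd
      linarith
    have hchoose : (d.choose k : ℝ) ≠ 0 := Nat.cast_ne_zero.2 (Nat.choose_pos hk).ne'
    have h := mul_sum_powersetCard_sum_sq (R := ℝ) (u := univ) hθ k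
    rw [card_univ, Fintype.card_fin] at h
    push_cast [Nat.cast_sub (by omega : 1 ≤ d), Nat.cast_sub hk] at h
    rw [hA, ← sum_div]
    field_simp
    linear_combination h
  have hlim := tendsto_average_exp_div_sqrt_pow (powersetCard_nonempty.2 (by simpa using hk))
    (fun S => ∑ i ∈ S, θ i) (sum_powersetCard_sum_eq_zero hθ k)
  rw [hmoment] at hlim
  refine ((Complex.continuous_ofReal.tendsto _).comp hlim).congr fun m => ?_
  rw [Function.comp_apply, hvieta, Complex.ofReal_pow]

theorem statement15 (d : ℕ) (hd : 2 ≤ d) (θ : Fin d → ℝ) (σ2 : ℝ)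
    (hmean : ∑ k, θ k = 0) (hvar : (∑ k, θ k ^ 2) / (d : ℝ) = σ2)
    (p : ℕ → Polynomial ℂ)
    (hp : ∀ m, p m = ∏ k, (Polynomial.X -
      Polynomial.C ((Real.exp (θ k / Real.sqrt (m : ℝ)) : ℝ) : ℂ))) :
    (∀ k ≤ d, Tendsto (fun m => atilde d (p m) k ^ m) atTop
        (nhds (((Real.exp ((k : ℝ) * ((d : ℝ) - (k : ℝ)) * σ2 /
          (2 * ((d : ℝ) - 1))) : ℝ) : ℂ)))) ∧
    (∀ j, Tendsto (fun m => (ffpow d (p m) m).coeff j) atTop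
        (nhds ((Idpoly d ((d : ℝ) * σ2 / ((d : ℝ) - 1))).coeff j))) := by
  subst hvar
  have hatilde : ∀ k ≤ d, Tendsto (fun m => atilde d (p m) k ^ m) atTop
      (nhds (((Real.exp ((k : ℝ) * ((d : ℝ) - (k : ℝ)) * ((∑ k, θ k ^ 2) / (d : ℝ)) /
        (2 * ((d : ℝ) - 1))) : ℝ) : ℂ))) := fun k hk => by
    simpa only [hp] using tendsto_atilde_prod_X_sub_C_exp_pow hd hmean hk
  refine ⟨hatilde, fun j => ?_⟩
  simp only [ffpow_eq_ofAtilde, Idpoly_eq_ofAtilde]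
  refine tendsto_coeff_ofAtilde (fun k hk => ?_) j
  convert hatilde k hk using 4
  field_simp
end
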